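/- arXiv:2207.07735 — 6 statements merged into one kernel-verified Lean document; each statement's English description precedes it below -/
import Mathlib

section
/- Chordal graphs admit positive completions of partially positive matrices (one direction of the chordal completion theorem): let G be a chordal graph on {1,…,n} (with all loops, i.e., consider the reflexive symmetric relation R containing the diagonal). If M ∈ M_n(ℂ) is Hermitian and for every clique C of G the principal submatrix (M_{ij})_{i,j∈C} is positive semidefinite, then there exists a Hermitian matrix N ∈ M_n(ℂ) with N_{ij} = 0 whenever {i,j} is an edge of G or i = j, such that M + N is positive semidefinite. -/
open ComplexOrder

def IsPerfectElimOrdering {n : ℕ} (G : SimpleGraph (Fin n)) (σ : Equiv.Perm (Fin n)) : Prop :=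
  ∀ i : Fin n, G.IsClique {v | v = σ i ∨ (i < σ.symm v ∧ G.Adj (σ i) v)}

/-- A finite graph is chordal iff it admits a perfect elimination ordering. -/
def IsChordal {n : ℕ} (G : SimpleGraph (Fin n)) : Prop :=
  ∃ σ : Equiv.Perm (Fin n), IsPerfectElimOrdering G σ

/-!
Eliminate the vertices one at a time along a perfect elimination ordering. If vertex `0` is
simplicial with neighbourhood `S`, complete the matrix on the remaining vertices to a positive
semidefinite `B` by induction. Positivity on the clique `{0} ∪ S` forces the column
`a = M_{S,0}` to be orthogonal to the kernel of `Q = M_{S,S}`, hence `a = Q b` with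
`b* Q b ≤ M₀₀`. Extending `b` by zero, the matrix with corner `M₀₀`, first column `B b` and lower
block `B` is positive semidefinite, and it agrees with `M` on the edges at `0` since
`(B b)_S = Q b = a`.
-/

open Matrix

variable {𝕜 V W : Type*} [RCLike 𝕜]

theorem Fintype.sum_subtype_of_eq_zero {ι M : Type*} [Fintype ι] [AddCommMonoid M]
    {p : ι → Prop} [DecidablePred p] {v : ι → M} (hv : ∀ i, ¬p i → v i = 0) :
    ∑ i : {i // p i}, v i = ∑ i, v i := by
  rw [← Fintype.sum_subtype_add_sum_subtype p v,
    Finset.sum_eq_zero fun (i : {i // ¬p i}) _ => hv i i.2, add_zero]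

theorem SimpleGraph.IsClique.preimage {G : SimpleGraph V} {s : Set V} (hs : G.IsClique s)
    {f : W → V} (hf : Function.Injective f) : (G.comap f).IsClique (f ⁻¹' s) :=
  fun _ hx _ hy hxy => hs hx hy (hf.ne hxy)

namespace IsPerfectElimOrdering

variable {n : ℕ}

theorem comap_refl {G : SimpleGraph (Fin n)} {σ : Equiv.Perm (Fin n)}
    (hσ : IsPerfectElimOrdering G σ) : IsPerfectElimOrdering (G.comap σ) (Equiv.refl _) := by
  intro i
  convert (hσ i).preimage σ.injective using 1
  ext v
  simp

theorem comap_succ {G : SimpleGraph (Fin (n + 1))}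
    (hG : IsPerfectElimOrdering G (Equiv.refl _)) :
    IsPerfectElimOrdering (G.comap Fin.succ) (Equiv.refl _) := by
  intro i
  convert (hG i.succ).preimage (Fin.succ_injective n) using 1
  ext v
  simp

theorem isClique_neighborSet_zero {G : SimpleGraph (Fin (n + 1))}
    (hG : IsPerfectElimOrdering G (Equiv.refl _)) : G.IsClique (G.neighborSet 0) :=
  (hG 0).subset fun _ hv => Or.inr ⟨Fin.pos_of_ne_zero (G.ne_of_adj hv).symm, hv⟩

end IsPerfectElimOrdering

theorem Matrix.IsHermitian.exists_mulVec_eq [Fintype V] [DecidableEq V] {Q : Matrix V V 𝕜}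
    (hQ : Q.IsHermitian) {a : V → 𝕜} (ha : ∀ x, Q *ᵥ x = 0 → star a ⬝ᵥ x = 0) :
    ∃ b, Q *ᵥ b = a := by
  have hT := isSymmetric_toEuclideanLin_iff.mpr hQ
  have : WithLp.toLp 2 a ∈ LinearMap.range Q.toEuclideanLin := by
    rw [← Submodule.orthogonal_orthogonal (LinearMap.range _), hT.orthogonal_range,
      Submodule.mem_orthogonal']
    intro x hx
    rw [EuclideanSpace.inner_eq_star_dotProduct, dotProduct_comm,
      ha x.ofLp (by simpa using congrArg WithLp.ofLp hx)]
  obtain ⟨b, hb⟩ := this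
  exact ⟨b, by simpa using congrArg WithLp.ofLp hb⟩

theorem Matrix.PosSemidef.exists_mulVec_eq_column_of_option [Fintype V] [DecidableEq V]
    {P : Matrix (Option V) (Option V) 𝕜} (hP : P.PosSemidef) :
    ∃ b : V → 𝕜, P.submatrix some some *ᵥ b = (fun i => P (some i) none) ∧
      star b ⬝ᵥ P.submatrix some some *ᵥ b ≤ P none none := by
  set Q := P.submatrix some some
  have hQ : Q.IsHermitian := hP.isHermitian.submatrix some
  have hP' : ∀ i, P none (some i) = star (P (some i) none) :=
    fun i => (hP.isHermitian.apply _ _).symm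
  have hker : ∀ x, Q *ᵥ x = 0 → star (fun i => P (some i) none) ⬝ᵥ x = 0 := by
    intro x hx
    -- `(0, x)` is isotropic for `P`, hence in its kernel; the first row then gives `a* x = 0`
    have hy : P *ᵥ (fun o => o.elim 0 x) = 0 := by
      rw [← hP.dotProduct_mulVec_zero_iff]
      simpa [Q, dotProduct, mulVec, Fintype.sum_option] using congrArg (star x ⬝ᵥ ·) hx
    simpa [mulVec, dotProduct, Fintype.sum_option, hP'] using congrFun hy none
  obtain ⟨b, hb⟩ := hQ.exists_mulVec_eq hker
  refine ⟨b, hb, ?_⟩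
  have hquad : star b ⬝ᵥ Q *ᵥ b = star (fun i => P (some i) none) ⬝ᵥ b := by
    rw [dotProduct_mulVec, ← hQ.eq, ← star_mulVec, hb]
  have hPy : P *ᵥ (fun o => o.elim 1 (-b)) =
      Pi.single none (P none none - star b ⬝ᵥ Q *ᵥ b) := by
    ext (_ | i)
    · rw [hquad]
      simp [mulVec, dotProduct, Fintype.sum_option, hP', sub_eq_add_neg]
    · simp only [mulVec, dotProduct, Fintype.sum_option, Option.elim_none, Option.elim_some,
        mul_one, Pi.neg_apply, mul_neg, Finset.sum_neg_distrib, ← sub_eq_add_neg,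
        Pi.single_eq_of_ne (Option.some_ne_none i), sub_eq_zero]
      exact (congrFun hb i).symm
  simpa [hPy] using hP.dotProduct_mulVec_nonneg (fun o => o.elim 1 (-b))

theorem Matrix.PosSemidef.exists_fin_succ_extension {n : ℕ} {B : Matrix (Fin n) (Fin n) 𝕜}
    (hB : B.PosSemidef) (b : Fin n → 𝕜) {d : 𝕜} (hd : star b ⬝ᵥ B *ᵥ b ≤ d) :
    ∃ A : Matrix (Fin (n + 1)) (Fin (n + 1)) 𝕜, A.PosSemidef ∧ A 0 0 = d ∧
      (∀ i, A i.succ 0 = (B *ᵥ b) i) ∧ ∀ i j, A i.succ j.succ = B i j := by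
  -- `A = diag(d - b* B b, 0) + C B Cᴴ`, where `C` has first row `b*` and then the identity
  set C : Matrix (Fin (n + 1)) (Fin n) 𝕜 :=
    of fun i k => Fin.cases (star (b k)) (fun i => (1 : Matrix (Fin n) (Fin n) 𝕜) i k) i
  refine ⟨diagonal (Pi.single 0 (d - star b ⬝ᵥ B *ᵥ b)) + C * B * Cᴴ,
    (PosSemidef.diagonal (Pi.single_nonneg.2 (sub_nonneg.2 hd))).add
      (hB.mul_mul_conjTranspose_same C), ?_, fun i => ?_, fun i j => ?_⟩
  · have hC : (C * B * Cᴴ) 0 0 = star b ⬝ᵥ B *ᵥ b := by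
      simpa [C, mul_apply, dotProduct, mulVec, Finset.mul_sum, Finset.sum_mul, mul_assoc]
        using Finset.sum_comm
    simp [hC]
  · simp [C, mul_apply, dotProduct, mulVec, one_apply]
  · simp [C, mul_apply, one_apply, diagonal_apply, Fin.succ_ne_zero]

def IsPartiallyPosSemidef (G : SimpleGraph V) (M : Matrix V V 𝕜) : Prop :=
  ∀ C : Finset V, G.IsClique (C : Set V) →
    (M.submatrix (fun i : C => (i : V)) (fun j : C => (j : V))).PosSemidef

def HasPosSemidefCompletion [Fintype V] (G : SimpleGraph V) (M : Matrix V V 𝕜) : Prop :=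
  ∃ A : Matrix V V 𝕜, A.PosSemidef ∧ ∀ i j, (i = j ∨ G.Adj i j) → A i j = M i j

namespace IsPartiallyPosSemidef

variable {G : SimpleGraph V} {M : Matrix V V 𝕜}

theorem posSemidef_submatrix (hM : IsPartiallyPosSemidef G M) {ι : Type*} [Fintype ι]
    {g : ι → V} (hg : G.IsClique (Set.range g)) : (M.submatrix g g).PosSemidef := by
  classical
  exact (hM (Finset.univ.image g) (by simpa using hg)).submatrix
    fun i => ⟨g i, Finset.mem_image_of_mem g (Finset.mem_univ i)⟩

theorem comap (hM : IsPartiallyPosSemidef G M) (f : W → V) :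
    IsPartiallyPosSemidef (G.comap f) (M.submatrix f f) := by
  intro C hC
  refine hM.posSemidef_submatrix (g := fun i : C => f i) ?_
  rintro _ ⟨x, rfl⟩ _ ⟨y, rfl⟩ hxy
  exact hC x.2 y.2 fun h => hxy (congrArg f h)

end IsPartiallyPosSemidef

namespace HasPosSemidefCompletion

theorem of_comap_equiv [Fintype V] [Fintype W] {G : SimpleGraph V} {M : Matrix V V 𝕜}
    (σ : W ≃ V) (h : HasPosSemidefCompletion (G.comap σ) (M.submatrix σ σ)) :
    HasPosSemidefCompletion G M := by
  obtain ⟨A, hA, hAM⟩ := h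
  refine ⟨A.submatrix σ.symm σ.symm, hA.submatrix _, fun i j hij => ?_⟩
  simpa using hAM (σ.symm i) (σ.symm j) (by simpa [σ.symm_apply_eq] using hij)

theorem of_comap_succ {n : ℕ} {G : SimpleGraph (Fin (n + 1))}
    {M : Matrix (Fin (n + 1)) (Fin (n + 1)) 𝕜} (h0 : G.IsClique (G.neighborSet 0))
    (hM : IsPartiallyPosSemidef G M)
    (hB : HasPosSemidefCompletion (G.comap Fin.succ) (M.submatrix Fin.succ Fin.succ)) :
    HasPosSemidefCompletion G M := by
  classical
  obtain ⟨B, hB, hBM⟩ := hB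
  let S := {j : Fin n // G.Adj 0 j.succ}
  let g : Option S → Fin (n + 1) := fun o => o.elim 0 fun j => j.1.succ
  have hP : (M.submatrix g g).PosSemidef := by
    refine hM.posSemidef_submatrix ((h0.insert fun _ h _ => h).subset ?_)
    rintro _ ⟨_ | j, rfl⟩
    exacts [Set.mem_insert _ _, Set.mem_insert_of_mem _ j.2]
  obtain ⟨c, hQc, hcQc⟩ := hP.exists_mulVec_eq_column_of_option
  let b : Fin n → 𝕜 := fun j => if h : G.Adj 0 j.succ then c ⟨j, h⟩ else 0
  have hb_on : ∀ k : S, b k = c k := fun k => dif_pos k.2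
  have hb_off : ∀ k, ¬G.Adj 0 k.succ → b k = 0 := fun k hk => dif_neg hk
  have hBS : ∀ j k : S, B j k = M j.1.succ k.1.succ := by
    intro j k
    refine hBM _ _ ((eq_or_ne j k).imp (congrArg _) fun hjk => h0 j.2 k.2 ?_)
    exact fun h => hjk (Subtype.ext (Fin.succ_injective _ h))
  have hBb : ∀ j : S, (B *ᵥ b) j = M j.1.succ 0 := by
    intro j
    refine Eq.trans ?_ (congrFun hQc j)
    rw [mulVec, dotProduct, ← Fintype.sum_subtype_of_eq_zero (p := fun k => G.Adj 0 k.succ)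
      fun k hk => by rw [hb_off k hk, mul_zero]]
    exact Finset.sum_congr rfl fun k _ => by rw [hBS, hb_on]; rfl
  have hbBb : star b ⬝ᵥ B *ᵥ b ≤ M 0 0 := by
    refine le_of_eq_of_le ?_ hcQc
    rw [dotProduct, ← Fintype.sum_subtype_of_eq_zero (p := fun k => G.Adj 0 k.succ)
      fun k hk => by simp [hb_off k hk], dotProduct_comm, dotProduct]
    refine Finset.sum_congr rfl fun j _ => ?_
    rw [hBb, congrFun hQc j, Pi.star_apply, hb_on, mul_comm]
    rfl
  obtain ⟨A, hA, hA00, hAs0, hAss⟩ := hB.exists_fin_succ_extension b hbBb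
  refine ⟨A, hA, fun i j hij => ?_⟩
  induction i using Fin.cases with
  | zero =>
    induction j using Fin.cases with
    | zero => exact hA00
    | succ j =>
      have hj : G.Adj 0 j.succ := hij.resolve_left (Fin.succ_ne_zero j).symm
      rw [← hA.isHermitian.apply, hAs0, hBb ⟨j, hj⟩]
      exact hP.isHermitian.apply none (some ⟨j, hj⟩)
  | succ i =>
    induction j using Fin.cases with
    | zero => exact (hAs0 i).trans (hBb ⟨i, (hij.resolve_left (Fin.succ_ne_zero i)).symm⟩)
    | succ j => exact (hAss i j).trans (hBM i j (hij.imp (Fin.succ_injective n).eq_iff.mp id))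

theorem of_isPerfectElimOrdering_refl :
    ∀ {n : ℕ} {G : SimpleGraph (Fin n)} {M : Matrix (Fin n) (Fin n) 𝕜},
      IsPerfectElimOrdering G (Equiv.refl _) → IsPartiallyPosSemidef G M →
        HasPosSemidefCompletion G M
  | 0, _, _, _, _ => ⟨0, .zero, fun i => i.elim0⟩
  | _ + 1, _, _, hG, hM => .of_comap_succ hG.isClique_neighborSet_zero hM
      (of_isPerfectElimOrdering_refl hG.comap_succ (hM.comap _))

theorem of_isChordal {n : ℕ} {G : SimpleGraph (Fin n)} {M : Matrix (Fin n) (Fin n) 𝕜}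
    (hG : IsChordal G) (hM : IsPartiallyPosSemidef G M) : HasPosSemidefCompletion G M :=
  let ⟨σ, hσ⟩ := hG
  .of_comap_equiv σ (.of_isPerfectElimOrdering_refl hσ.comap_refl (hM.comap σ))

end HasPosSemidefCompletion

/-- Positive completion for partially positive matrices on a chordal graph:
if every clique-indexed principal submatrix of a Hermitian `M` is PSD, then
`M` can be corrected off the edges of `G` to a PSD matrix. -/
theorem chordal_positive_completion {n : ℕ} (G : SimpleGraph (Fin n))
    (hG : IsChordal G) (M : Matrix (Fin n) (Fin n) ℂ) (hM : M.IsHermitian)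
    (hpos : ∀ C : Finset (Fin n), G.IsClique (C : Set (Fin n)) →
      (M.submatrix (fun i : C => (i : Fin n)) (fun j : C => (j : Fin n))).PosSemidef) :
    ∃ N : Matrix (Fin n) (Fin n) ℂ, N.IsHermitian ∧
      (∀ i j : Fin n, (i = j ∨ G.Adj i j) → N i j = 0) ∧ (M + N).PosSemidef := by
  obtain ⟨A, hA, hAM⟩ := HasPosSemidefCompletion.of_isChordal hG hpos
  exact ⟨A - M, hA.isHermitian.sub hM, fun i j hij => sub_eq_zero.2 (hAM i j hij),
    by rwa [add_sub_cancel]⟩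
end

section
/- For a chordal graph G on {1,…,n}, a Hermitian matrix M supported on G (M_{ij} = 0 unless i = j or {i,j} ∈ E(G)) is the projection (entrywise restriction to positions of G and the diagonal) of some positive semidefinite matrix if and only if the principal submatrix (M_{ij})_{i,j∈C} is positive semidefinite for every maximal clique C of G. -/
open ComplexOrder

open Classical in
/-- Entrywise projection onto the positions of `G` (edges and the diagonal). -/
noncomputable def projOn {n : ℕ} (G : SimpleGraph (Fin n)) (M : Matrix (Fin n) (Fin n) ℂ) :
    Matrix (Fin n) (Fin n) ℂ :=
  fun i j => if i = j ∨ G.Adj i j then M i j else 0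

/-!
Complete `M` one vertex at a time, along the reverse of a perfect elimination ordering. When a
vertex `κ` is added, `κ` and its previously added neighbours `S` form a clique, so the block of
`M` on `{κ} ∪ S` is PSD. Hence the column `M_{Sκ}` is orthogonal to the kernel of the current
completion `P` restricted to `S`, i.e. `M_{Sκ} = (P w)_S` for some `w` supported on `S`. Bordering
`P` by the row `w* P` and the diagonal entry `M_{κκ}` gives
`(1 + w e_κᵀ)ᴴ P (1 + w e_κᵀ) + (M_{κκ} - w* P w) e_κ e_κᵀ`, which is PSD because the Schur
complement `M_{κκ} - w* P w` is the quadratic form of `M` at `e_κ - w`.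
-/

namespace Matrix

variable {ι 𝕜 : Type*} [Fintype ι] [RCLike 𝕜]

theorem IsHermitian.exists_mulVec_eq_s10 [DecidableEq ι] {Q : Matrix ι ι 𝕜} (hQ : Q.IsHermitian)
    {b : ι → 𝕜} (hb : ∀ v, Q *ᵥ v = 0 → star v ⬝ᵥ b = 0) : ∃ w, Q *ᵥ w = b := by
  have hT := isSymmetric_toEuclideanLin_iff.mpr hQ
  have : WithLp.toLp 2 b ∈ LinearMap.range (toEuclideanLin Q) := by
    rw [← Submodule.orthogonal_orthogonal (LinearMap.range _), hT.orthogonal_range]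
    intro v hv
    have := hb v.ofLp (by simpa using congrArg WithLp.ofLp hv)
    simpa [EuclideanSpace.inner_eq_star_dotProduct, dotProduct_comm] using this
  obtain ⟨w, hw⟩ := this
  exact ⟨w.ofLp, by simpa using congrArg WithLp.ofLp hw⟩

variable {s : Finset ι} {x : ι → 𝕜}

theorem restrict_dotProduct_restrict (hx : ∀ i ∉ s, x i = 0) (y : ι → 𝕜) :
    s.restrict x ⬝ᵥ s.restrict y = x ⬝ᵥ y := by
  rw [dotProduct, dotProduct, ← Finset.sum_subset (Finset.subset_univ s) fun i _ hi => by
    rw [hx i hi, zero_mul]]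
  exact Finset.sum_coe_sort s fun i => x i * y i

theorem submatrix_mulVec_restrict (A : Matrix ι ι 𝕜) (hx : ∀ i ∉ s, x i = 0) :
    A.submatrix ((↑) : s → ι) (↑) *ᵥ s.restrict x = s.restrict (A *ᵥ x) := by
  ext i
  rw [mulVec, dotProduct_comm]
  exact (restrict_dotProduct_restrict hx (A i)).trans (dotProduct_comm _ _)

theorem restrict_mulVec_eq_of_submatrix_eq {A B : Matrix ι ι 𝕜}
    (hAB : A.submatrix ((↑) : s → ι) ((↑) : s → ι) = B.submatrix (↑) (↑))
    (hx : ∀ i ∉ s, x i = 0) : s.restrict (A *ᵥ x) = s.restrict (B *ᵥ x) := by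
  rw [← submatrix_mulVec_restrict A hx, hAB, submatrix_mulVec_restrict B hx]

theorem restrict_star_dotProduct_submatrix_mulVec (A : Matrix ι ι 𝕜) {y : ι → 𝕜}
    (hx : ∀ i ∉ s, x i = 0) (hy : ∀ i ∉ s, y i = 0) :
    star (s.restrict x) ⬝ᵥ A.submatrix ((↑) : s → ι) (↑) *ᵥ s.restrict y = star x ⬝ᵥ A *ᵥ y := by
  rw [submatrix_mulVec_restrict A hy]
  exact restrict_dotProduct_restrict (x := star x) (by simpa using hx) _

theorem IsHermitian.star_dotProduct_mulVec_of_submatrix {A : Matrix ι ι 𝕜} {y : ι → 𝕜}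
    (hA : (A.submatrix ((↑) : s → ι) (↑)).IsHermitian)
    (hx : ∀ i ∉ s, x i = 0) (hy : ∀ i ∉ s, y i = 0) :
    star (star x ⬝ᵥ A *ᵥ y) = star y ⬝ᵥ A *ᵥ x := by
  rw [← restrict_star_dotProduct_submatrix_mulVec A hx hy,
    ← restrict_star_dotProduct_submatrix_mulVec A hy hx, star_dotProduct, star_star, star_mulVec,
    ← dotProduct_mulVec, hA.eq]

theorem IsHermitian.exists_restrict_mulVec_eq [DecidableEq ι] {Q : Matrix ι ι 𝕜}
    (hQ : Q.IsHermitian) {b : ι → 𝕜}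
    (hb : ∀ v, (∀ i ∉ s, v i = 0) → s.restrict (Q *ᵥ v) = 0 → star v ⬝ᵥ b = 0) :
    ∃ w, (∀ i ∉ s, w i = 0) ∧ s.restrict (Q *ᵥ w) = s.restrict b := by
  let extend (v : s → 𝕜) (i : ι) : 𝕜 := if h : i ∈ s then v ⟨i, h⟩ else 0
  have extend_supp (v : s → 𝕜) : ∀ i ∉ s, extend v i = 0 := fun i hi => dif_neg hi
  have restrict_extend (v : s → 𝕜) : s.restrict (extend v) = v := by
    ext i; simp [extend, Finset.restrict]
  obtain ⟨w, hw⟩ := (hQ.submatrix ((↑) : s → ι)).exists_mulVec_eq_s10 (b := s.restrict b) fun v hv => by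
    have := hb (extend v) (extend_supp v) (by
      rw [← submatrix_mulVec_restrict Q (extend_supp v), restrict_extend, hv])
    rw [← restrict_dotProduct_restrict (x := star (extend v)) (by simpa using extend_supp v)]
      at this
    rwa [← restrict_extend v]
  refine ⟨extend w, extend_supp w, ?_⟩
  rw [← submatrix_mulVec_restrict Q (extend_supp w), restrict_extend, hw]

variable [DecidableEq ι]

def borderExtend (P : Matrix ι ι 𝕜) (κ : ι) (w : ι → 𝕜) (d : 𝕜) : Matrix ι ι 𝕜 :=
  (1 + vecMulVec w (Pi.single κ 1))ᴴ * P * (1 + vecMulVec w (Pi.single κ 1)) +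
    d • vecMulVec (Pi.single κ 1) (Pi.single κ 1)

theorem borderExtend_apply (P : Matrix ι ι 𝕜) (κ : ι) (w : ι → 𝕜) (d : 𝕜) (i j : ι) :
    borderExtend P κ w d i j = P i j + (P *ᵥ w) i * (Pi.single κ 1 : ι → 𝕜) j +
      (Pi.single κ 1 : ι → 𝕜) i * (star w ᵥ* P) j +
      (star w ⬝ᵥ P *ᵥ w + d) * (Pi.single κ 1 : ι → 𝕜) i * (Pi.single κ 1 : ι → 𝕜) j := by
  simp only [borderExtend, conjTranspose_add, conjTranspose_one, conjTranspose_vecMulVec,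
    Pi.star_single, star_one, Matrix.add_mul, Matrix.mul_add, Matrix.mul_one, mul_vecMulVec,
    vecMulVec_mul, add_mulVec, vecMulVec_mulVec, add_apply, smul_apply, vecMulVec_apply,
    Pi.add_apply, Pi.smul_apply, smul_eq_mul, dotProduct_mulVec, Matrix.one_mul, op_smul_eq_mul]
  ring

theorem posSemidef_borderExtend {P : Matrix ι ι 𝕜} (hP : P.PosSemidef) (κ : ι) (w : ι → 𝕜)
    {d : 𝕜} (hd : 0 ≤ d) : (borderExtend P κ w d).PosSemidef := by
  refine (hP.conjTranspose_mul_mul_same _).add ?_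
  simpa using (posSemidef_vecMulVec_self_star (Pi.single κ (1 : 𝕜))).smul hd

section Border

variable {P A : Matrix ι ι 𝕜} {S : Finset ι} {κ : ι}

theorem exists_restrict_mulVec_eq_col (hP : P.IsHermitian)
    (hAS : A.submatrix ((↑) : S → ι) ((↑) : S → ι) = P.submatrix (↑) (↑))
    (hA : (A.submatrix ((↑) : ↥(insert κ S) → ι) (↑)).PosSemidef) :
    ∃ w, (∀ i ∉ S, w i = 0) ∧ S.restrict (P *ᵥ w) = S.restrict (A *ᵥ Pi.single κ 1) := by
  refine hP.exists_restrict_mulVec_eq fun v hvS hPv => ?_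
  have hvC : ∀ i ∉ insert κ S, v i = 0 := fun i hi => hvS i (by grind)
  have hvAv : star v ⬝ᵥ A *ᵥ v = 0 := by
    rw [← restrict_dotProduct_restrict (x := star v) (by simpa using hvS),
      restrict_mulVec_eq_of_submatrix_eq hAS hvS, hPv, dotProduct_zero]
  have hAv := (hA.dotProduct_mulVec_zero_iff _).mp
    (by rwa [restrict_star_dotProduct_submatrix_mulVec A hvC hvC])
  rw [submatrix_mulVec_restrict A hvC] at hAv
  rw [← hA.1.star_dotProduct_mulVec_of_submatrix (x := Pi.single κ 1) (by grind) hvC]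
  simpa [Pi.star_single] using congrFun hAv ⟨κ, Finset.mem_insert_self κ S⟩

theorem star_dotProduct_mulVec_le_of_restrict_mulVec_eq_col (hP : P.PosSemidef)
    (hAS : A.submatrix ((↑) : S → ι) ((↑) : S → ι) = P.submatrix (↑) (↑))
    (hA : (A.submatrix ((↑) : ↥(insert κ S) → ι) (↑)).PosSemidef) {w : ι → 𝕜}
    (hwS : ∀ i ∉ S, w i = 0) (hw : S.restrict (P *ᵥ w) = S.restrict (A *ᵥ Pi.single κ 1)) :
    star w ⬝ᵥ P *ᵥ w ≤ A κ κ := by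
  set e : ι → 𝕜 := Pi.single κ 1
  have he : ∀ i ∉ insert κ S, e i = 0 := fun i hi => Pi.single_eq_of_ne (by grind) _
  have hwC : ∀ i ∉ insert κ S, w i = 0 := fun i hi => hwS i (by grind)
  have hwS' : ∀ i ∉ S, star w i = 0 := by simpa using hwS
  have hwAe : star w ⬝ᵥ A *ᵥ e = star w ⬝ᵥ P *ᵥ w := by
    rw [← restrict_dotProduct_restrict hwS', ← hw, restrict_dotProduct_restrict hwS']
  have hwAw : star w ⬝ᵥ A *ᵥ w = star w ⬝ᵥ P *ᵥ w := by
    rw [← restrict_dotProduct_restrict hwS', restrict_mulVec_eq_of_submatrix_eq hAS hwS,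
      restrict_dotProduct_restrict hwS']
  have heAw : star e ⬝ᵥ A *ᵥ w = star w ⬝ᵥ P *ᵥ w := by
    rw [← hA.1.star_dotProduct_mulVec_of_submatrix hwC he, hwAe]
    exact (hP.dotProduct_mulVec_nonneg w).isSelfAdjoint
  have hC : ∀ i ∉ insert κ S, (e - w) i = 0 := fun i hi => by
    rw [Pi.sub_apply, he i hi, hwC i hi, sub_zero]
  have := hA.dotProduct_mulVec_nonneg ((insert κ S).restrict (e - w))
  rw [restrict_star_dotProduct_submatrix_mulVec A hC hC, star_sub, sub_dotProduct, mulVec_sub,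
    dotProduct_sub, dotProduct_sub, hwAe, hwAw, heAw] at this
  simpa [e, Pi.star_single] using this

theorem PosSemidef.exists_extension (hP : P.PosSemidef) {T : Finset ι}
    (hPT : ∀ i j, P i j ≠ 0 → i ∈ T ∧ j ∈ T) (hκ : κ ∉ T)
    (hAS : A.submatrix ((↑) : S → ι) ((↑) : S → ι) = P.submatrix (↑) (↑))
    (hA : (A.submatrix ((↑) : ↥(insert κ S) → ι) (↑)).PosSemidef) :
    ∃ P' : Matrix ι ι 𝕜, P'.PosSemidef ∧ (∀ i j, P' i j ≠ 0 → i ∈ insert κ T ∧ j ∈ insert κ T) ∧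
      (∀ i j, i ≠ κ → j ≠ κ → P' i j = P i j) ∧ ∀ j ∈ insert κ S, P' j κ = A j κ := by
  obtain ⟨w, hwS, hw⟩ := exists_restrict_mulVec_eq_col hP.1 hAS hA
  have hd := sub_nonneg.mpr (star_dotProduct_mulVec_le_of_restrict_mulVec_eq_col hP hAS hA hwS hw)
  have hrow : ∀ i ∉ T, ∀ j, P i j = 0 := fun i hi j => by
    by_contra h; exact hi (hPT i j h).1
  have hcol : ∀ j ∉ T, ∀ i, P i j = 0 := fun j hj i => by
    by_contra h; exact hj (hPT i j h).2
  have hPw : ∀ i ∉ T, (P *ᵥ w) i = 0 := fun i hi => by simp [mulVec, dotProduct, hrow i hi]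
  have hwP : ∀ j ∉ T, (star w ᵥ* P) j = 0 := fun j hj => by simp [vecMul, dotProduct, hcol j hj]
  refine ⟨borderExtend P κ w _, posSemidef_borderExtend hP κ w hd, ?_, ?_, ?_⟩
  · intro i j hij
    by_contra h
    apply hij
    rw [borderExtend_apply]
    rcases not_and_or.mp h with hi | hj
    · simp [Pi.single_apply, show i ≠ κ by grind, hrow i (by grind), hPw i (by grind)]
    · simp [Pi.single_apply, show j ≠ κ by grind, hcol j (by grind), hwP j (by grind)]
  · intro i j hi hj
    simp [borderExtend_apply, hi, hj]
  · intro j hj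
    rw [borderExtend_apply]
    rcases eq_or_ne j κ with rfl | hjκ
    · simp [hrow j hκ, hPw j hκ, hwP j hκ]
    · have := congrFun hw ⟨j, by grind⟩
      simp [hjκ, hcol κ hκ, hwP κ hκ, Finset.restrict] at this ⊢
      exact this

end Border

end Matrix

section Completion

variable {ι 𝕜 : Type*} [RCLike 𝕜]

structure IsPSDCompletionOn (G : SimpleGraph ι) (M : Matrix ι ι 𝕜) (T : Finset ι)
    (P : Matrix ι ι 𝕜) : Prop where
  posSemidef : P.PosSemidef
  support : ∀ i j, P i j ≠ 0 → i ∈ T ∧ j ∈ T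
  eq_on : ∀ i ∈ T, ∀ j ∈ T, (i = j ∨ G.Adj i j) → P i j = M i j

variable {G : SimpleGraph ι} {M : Matrix ι ι 𝕜}

theorem isPSDCompletionOn_empty : IsPSDCompletionOn G M ∅ 0 :=
  ⟨.zero, fun _ _ h => absurd rfl h, by simp⟩

theorem IsPSDCompletionOn.exists_insert [Fintype ι] [DecidableEq ι]
    (hM : ∀ C : Finset ι, G.IsClique (C : Set ι) → (M.submatrix ((↑) : C → ι) (↑)).PosSemidef)
    {T : Finset ι} {P : Matrix ι ι 𝕜} (hP : IsPSDCompletionOn G M T P) {κ : ι} (hκ : κ ∉ T)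
    (hC : G.IsClique {v | v = κ ∨ v ∈ T ∧ G.Adj κ v}) :
    ∃ P', IsPSDCompletionOn G M (insert κ T) P' := by
  classical
  set S := {v ∈ T | G.Adj κ v}
  have hSC : ((insert κ S : Finset ι) : Set ι) = {v | v = κ ∨ v ∈ T ∧ G.Adj κ v} := by
    ext; simp [S]
  have hS : ∀ i ∈ S, ∀ j ∈ S, M i j = P i j := fun i hi j hj =>
    (hP.eq_on i (Finset.mem_filter.mp hi).1 j (Finset.mem_filter.mp hj).1
      (or_iff_not_imp_left.mpr (hC (Or.inr (Finset.mem_filter.mp hi))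
        (Or.inr (Finset.mem_filter.mp hj))))).symm
  have hMC := hM _ (hSC ▸ hC)
  obtain ⟨P', hP', hsupp, hPP', hcol⟩ := hP.posSemidef.exists_extension hP.support hκ
    (by ext i j; exact hS i i.2 j j.2) hMC
  have hmemS {j : ι} (hj : j ∈ insert κ T) (hjκ : j ≠ κ) (hadj : G.Adj κ j) : j ∈ insert κ S :=
    Finset.mem_insert_of_mem (Finset.mem_filter.mpr ⟨Finset.mem_of_mem_insert_of_ne hj hjκ, hadj⟩)
  refine ⟨P', hP', hsupp, fun i hi j hj hij => ?_⟩
  by_cases hiκ : i = κ <;> by_cases hjκ : j = κ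
  · rw [hiκ, hjκ]
    exact hcol κ (Finset.mem_insert_self κ S)
  · rw [hiκ] at hij ⊢
    have hjS := hmemS hj hjκ (hij.resolve_left (Ne.symm hjκ))
    rw [← hP'.1.apply, hcol j hjS]
    exact hMC.1.apply ⟨κ, Finset.mem_insert_self κ S⟩ ⟨j, hjS⟩
  · rw [hjκ] at hij ⊢
    exact hcol i (hmemS hi hiκ (hij.resolve_left hiκ).symm)
  · rw [hPP' i j hiκ hjκ]
    exact hP.eq_on i (Finset.mem_of_mem_insert_of_ne hi hiκ) j
      (Finset.mem_of_mem_insert_of_ne hj hjκ) hij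

end Completion

theorem SimpleGraph.IsClique.exists_maximal_superset {α : Type*} [Finite α] {G : SimpleGraph α}
    {C : Finset α} (hC : G.IsClique (C : Set α)) :
    ∃ D : Finset α, C ⊆ D ∧ G.IsClique (D : Set α) ∧
      ∀ D' : Finset α, G.IsClique (D' : Set α) → D ⊆ D' → D = D' := by
  obtain ⟨D, hCD, hD⟩ :=
    Finite.exists_le_maximal (p := fun D : Finset α => G.IsClique (D : Set α)) hC
  exact ⟨D, hCD, hD.1, fun D' hD' h => le_antisymm h (hD.2 hD' h)⟩

theorem posSemidef_submatrix_of_isClique {α R : Type*} [Finite α] [Ring R] [PartialOrder R]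
    [StarRing R] {G : SimpleGraph α} {M : Matrix α α R}
    (hmax : ∀ C : Finset α, (G.IsClique (C : Set α) ∧
      ∀ D : Finset α, G.IsClique (D : Set α) → C ⊆ D → C = D) →
      (M.submatrix ((↑) : C → α) (↑)).PosSemidef)
    {C : Finset α} (hC : G.IsClique (C : Set α)) : (M.submatrix ((↑) : C → α) (↑)).PosSemidef := by
  obtain ⟨D, hCD, hD, hDmax⟩ := hC.exists_maximal_superset
  exact (hmax D ⟨hD, hDmax⟩).submatrix fun c : C => ⟨c, hCD c.2⟩

theorem IsPerfectElimOrdering.exists_isPSDCompletionOn_univ {𝕜 : Type*} [RCLike 𝕜] {n : ℕ}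
    {G : SimpleGraph (Fin n)} {σ : Equiv.Perm (Fin n)} (hσ : IsPerfectElimOrdering G σ)
    {M : Matrix (Fin n) (Fin n) 𝕜}
    (hM : ∀ C : Finset (Fin n), G.IsClique (C : Set (Fin n)) →
      (M.submatrix ((↑) : C → Fin n) (↑)).PosSemidef) :
    ∃ P, IsPSDCompletionOn G M Finset.univ P := by
  have key : ∀ k ≤ n,
      ∃ P, IsPSDCompletionOn G M (Finset.univ.filter fun v => k ≤ (σ.symm v : ℕ)) P := by
    intro k hk
    induction hk using Nat.decreasingInduction with
    | self => exact ⟨0, by simpa [Finset.filter_false_of_mem] using isPSDCompletionOn_empty⟩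
    | of_succ k hk ih =>
      obtain ⟨P, hP⟩ := ih
      have hT : (Finset.univ.filter fun v => k ≤ (σ.symm v : ℕ)) =
          insert (σ ⟨k, hk⟩) (Finset.univ.filter fun v => k + 1 ≤ (σ.symm v : ℕ)) := by
        ext v
        simp only [Finset.mem_filter, Finset.mem_univ, true_and, Finset.mem_insert,
          ← Equiv.symm_apply_eq, Fin.ext_iff]
        omega
      rw [hT]
      refine hP.exists_insert hM (by simp) ?_
      convert hσ ⟨k, hk⟩ using 6
      simp [Fin.lt_def]
  simpa using key 0 n.zero_le

theorem Matrix.PosSemidef.posSemidef_submatrix_projOn {n : ℕ} {G : SimpleGraph (Fin n)}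
    {P : Matrix (Fin n) (Fin n) ℂ} (hP : P.PosSemidef) {C : Finset (Fin n)}
    (hC : G.IsClique (C : Set (Fin n))) :
    ((projOn G P).submatrix ((↑) : C → Fin n) (↑)).PosSemidef := by
  convert hP.submatrix ((↑) : C → Fin n) using 1
  ext i j
  by_cases hij : i = j
  · simp [projOn, hij]
  · simp [projOn, hC i.2 j.2 (Subtype.coe_ne_coe.mpr hij)]

theorem chordal_proj_psd_iff_maximal_cliques_psd_general {n : ℕ} (G : SimpleGraph (Fin n))
    (hG : IsChordal G) (M : Matrix (Fin n) (Fin n) ℂ)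
    (hsupp : ∀ i j : Fin n, i ≠ j → ¬ G.Adj i j → M i j = 0) :
    (∃ P : Matrix (Fin n) (Fin n) ℂ, P.PosSemidef ∧ projOn G P = M) ↔
      ∀ C : Finset (Fin n),
        (G.IsClique (C : Set (Fin n)) ∧
          ∀ D : Finset (Fin n), G.IsClique (D : Set (Fin n)) → C ⊆ D → C = D) →
        (M.submatrix (fun i : C => (i : Fin n)) (fun j : C => (j : Fin n))).PosSemidef := by
  constructor
  · rintro ⟨P, hP, rfl⟩ C ⟨hC, -⟩
    exact hP.posSemidef_submatrix_projOn hC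
  · intro hmax
    obtain ⟨σ, hσ⟩ := hG
    obtain ⟨P, hP⟩ := hσ.exists_isPSDCompletionOn_univ
      fun C hC => posSemidef_submatrix_of_isClique hmax hC
    refine ⟨P, hP.posSemidef, funext₂ fun i j => ?_⟩
    by_cases hij : i = j ∨ G.Adj i j
    · simpa [projOn, hij] using hP.eq_on i (Finset.mem_univ i) j (Finset.mem_univ j) hij
    · rw [not_or] at hij
      simp [projOn, hij, hsupp i j hij.1 hij.2]

/-- For chordal `G`, a Hermitian matrix supported on `G` is the projection of a PSD matrix
iff all its maximal-clique principal submatrices are PSD. -/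
theorem chordal_proj_psd_iff_maximal_cliques_psd {n : ℕ} (G : SimpleGraph (Fin n))
    (hG : IsChordal G) (M : Matrix (Fin n) (Fin n) ℂ) (hM : M.IsHermitian)
    (hsupp : ∀ i j : Fin n, i ≠ j → ¬ G.Adj i j → M i j = 0) :
    (∃ P : Matrix (Fin n) (Fin n) ℂ, P.PosSemidef ∧ projOn G P = M) ↔
      ∀ C : Finset (Fin n),
        (G.IsClique (C : Set (Fin n)) ∧
          ∀ D : Finset (Fin n), G.IsClique (D : Set (Fin n)) → C ⊆ D → C = D) →
        (M.submatrix (fun i : C => (i : Fin n)) (fun j : C => (j : Fin n))).PosSemidef :=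
  chordal_proj_psd_iff_maximal_cliques_psd_general G hG M hsupp
end

section
/- Let G be a chordal graph on {1,…,n} and let M be a nonzero partially positive Hermitian matrix supported on G (i.e., (M_{ij})_{i,j∈C} is PSD for each maximal clique C) such that: (1) for every maximal clique C, the submatrix (M_{ij})_{i,j∈C} has rank at most one, and (2) the induced subgraph of G on the vertices i with M_{ii} ≠ 0 is connected. Then M generates an extremal ray of the cone of partially positive matrices supported on G: whenever M = A + B with A and B partially positive matrices supported on G, both A and B are scalar multiples of M. -/
open ComplexOrder

/-- `M` is supported on the graph `G` (its edges and the diagonal). -/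
def SupportedOn {n : ℕ} (G : SimpleGraph (Fin n)) (M : Matrix (Fin n) (Fin n) ℂ) : Prop :=
  ∀ i j : Fin n, i ≠ j → ¬ G.Adj i j → M i j = 0

/-- `M` is a partially positive Hermitian matrix supported on `G`: every principal
submatrix indexed by a clique of `G` is positive semidefinite. -/
def PartiallyPos {n : ℕ} (G : SimpleGraph (Fin n)) (M : Matrix (Fin n) (Fin n) ℂ) : Prop :=
  M.IsHermitian ∧ SupportedOn G M ∧
    ∀ C : Finset (Fin n), G.IsClique (C : Set (Fin n)) →
      (M.submatrix (fun i : C => (i : Fin n)) (fun j : C => (j : Fin n))).PosSemidef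

/-! If `A` and `M - A` are partially positive, look at an edge `ij`. It lies in a maximal clique,
where `M` has rank one, so the `2 × 2` block of `M` on `{i, j}` is singular; a kernel vector of a
sum of positive semidefinite matrices is a kernel vector of each summand, so when `M i i ≠ 0` the
block of `A` is `A i i / M i i` times the block of `M`. The ratio `A i i / M i i` is therefore
constant along the edges of the connected graph induced on `{i | M i i ≠ 0}`, while a zero
diagonal entry of a positive semidefinite matrix kills its whole row, in `A` and in `M - A`. -/

open Matrix

namespace Matrix

variable {m 𝕜 : Type*} [RCLike 𝕜]

section Fintype

variable [Fintype m]

theorem PosSemidef.mulVec_eq_zero_of_add_mulVec_eq_zero {A B : Matrix m m 𝕜}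
    (hA : A.PosSemidef) (hB : B.PosSemidef) {x : m → 𝕜} (h : (A + B) *ᵥ x = 0) :
    A *ᵥ x = 0 := by
  have hsum : star x ⬝ᵥ (A *ᵥ x) + star x ⬝ᵥ (B *ᵥ x) = 0 := by
    rw [← dotProduct_add, ← add_mulVec, h, dotProduct_zero]
  rw [← hA.dotProduct_mulVec_zero_iff]
  exact ((add_eq_zero_iff_of_nonneg (hA.dotProduct_mulVec_nonneg x)
    (hB.dotProduct_mulVec_nonneg x)).1 hsum).1

theorem PosSemidef.apply_eq_zero_of_diag_eq_zero {A : Matrix m m 𝕜}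
    (hA : A.PosSemidef) {i : m} (hi : A i i = 0) (j : m) : A i j = 0 := by
  classical
  have hzero := (hA.dotProduct_mulVec_zero_iff (Pi.single i 1)).1 (by simp [hi])
  rw [← hA.1.apply, show A j i = 0 by simpa using congrFun hzero j, star_zero]

theorem eq_smul_of_posSemidef_of_posSemidef_sub_of_det_eq_zero {R A : Matrix (Fin 2) (Fin 2) 𝕜}
    (hA : A.PosSemidef) (hRA : (R - A).PosSemidef) (hdet : R.det = 0) (h00 : R 0 0 ≠ 0) :
    A = (A 0 0 / R 0 0) • R := by
  rw [det_fin_two] at hdet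
  set y : Fin 2 → 𝕜 := ![-R 0 1, R 0 0]
  have hRy : (A + (R - A)) *ᵥ y = 0 := by
    rw [add_sub_cancel]
    ext k
    fin_cases k
    · simp [y, mulVec, dotProduct, Fin.sum_univ_two, mul_comm]
    · simp [y, mulVec, dotProduct, Fin.sum_univ_two]
      linear_combination hdet
  have hAy := congrFun (hA.mulVec_eq_zero_of_add_mulVec_eq_zero hRA hRy)
  have e0 : A 0 0 * R 0 1 = A 0 1 * R 0 0 := by
    simpa [y, mulVec, dotProduct, Fin.sum_univ_two, neg_add_eq_zero] using hAy 0
  have e1 : A 1 0 * R 0 1 = A 1 1 * R 0 0 := by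
    simpa [y, mulVec, dotProduct, Fin.sum_univ_two, neg_add_eq_zero] using hAy 1
  have hR : R.IsHermitian := by simpa using hA.1.add hRA.1
  have h01 : A 0 1 = A 0 0 / R 0 0 * R 0 1 := by
    field_simp
    linear_combination -e0
  have h10 : A 1 0 = A 0 0 / R 0 0 * R 1 0 := by
    rw [← hA.1.apply 1 0, ← hR.apply 1 0, h01, star_mul', star_div₀, hA.1.apply 0 0,
      hR.apply 0 0]
  have h11 : A 1 1 = A 0 0 / R 0 0 * R 1 1 := by
    have hc : A 0 0 / R 0 0 * R 0 0 = A 0 0 := div_mul_cancel₀ _ h00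
    rw [div_mul_eq_mul_div, eq_div_iff h00]
    linear_combination -e1 + R 0 1 * h10 - A 0 0 / R 0 0 * hdet + R 1 1 * hc
  ext i j
  fin_cases i <;> fin_cases j <;> simp [h01, h10, h11, h00]

end Fintype

theorem det_submatrix_eq_zero_of_rank_le_one {n : Type*} [Fintype n] {N : Matrix m n 𝕜}
    (hN : N.rank ≤ 1) (f : Fin 2 → m) (g : Fin 2 → n) : (N.submatrix f g).det = 0 := by
  by_contra hdet
  have := (rank_of_det_ne_zero hdet).symm.trans_le (N.rank_submatrix_le f g)
  simp at this
  omega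

end Matrix

theorem SimpleGraph.Preconnected.eq_of_forall_adj {V α : Type*} {G : SimpleGraph V}
    (hG : G.Preconnected) {f : V → α} (hf : ∀ u v, G.Adj u v → f u = f v) (u v : V) :
    f u = f v := by
  obtain ⟨w⟩ := hG u v
  induction w with
  | nil => rfl
  | cons hadj _ ih => exact (hf _ _ hadj).trans ih

theorem SimpleGraph.exists_maximal_isClique_superset {V : Type*} [Finite V] {G : SimpleGraph V}
    {C : Finset V} (hC : G.IsClique (C : Set V)) :
    ∃ D : Finset V, C ⊆ D ∧ G.IsClique (D : Set V) ∧
      ∀ D' : Finset V, G.IsClique (D' : Set V) → D ⊆ D' → D = D' := by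
  obtain ⟨D, hCD, hD⟩ :=
    Finite.exists_le_maximal (p := fun D : Finset V => G.IsClique (D : Set V)) hC
  exact ⟨D, hCD, hD.prop, fun D' hD' hDD' => le_antisymm hDD' (hD.2 hD' hDD')⟩

section PartiallyPositive

variable {n : ℕ} {G : SimpleGraph (Fin n)}

theorem det_submatrix_pair_eq_zero_of_adj {M : Matrix (Fin n) (Fin n) ℂ}
    (hrank : ∀ C : Finset (Fin n),
      (G.IsClique (C : Set (Fin n)) ∧
        ∀ D : Finset (Fin n), G.IsClique (D : Set (Fin n)) → C ⊆ D → C = D) →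
      (M.submatrix (fun i : C => (i : Fin n)) (fun j : C => (j : Fin n))).rank ≤ 1)
    {i j : Fin n} (hij : G.Adj i j) : (M.submatrix ![i, j] ![i, j]).det = 0 := by
  classical
  obtain ⟨D, hijD, hD, hDmax⟩ := G.exists_maximal_isClique_superset (C := {i, j})
    (by simpa [SimpleGraph.isClique_pair] using fun _ => hij)
  have hmem : ∀ k, ![i, j] k ∈ D := fun k => hijD (by fin_cases k <;> simp)
  exact det_submatrix_eq_zero_of_rank_le_one (hrank D ⟨hD, hDmax⟩) (fun k => ⟨_, hmem k⟩)
    (fun k => ⟨_, hmem k⟩)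

namespace PartiallyPos

variable {P : Matrix (Fin n) (Fin n) ℂ}

theorem posSemidef_submatrix (hP : PartiallyPos G P) {ι : Type*} [Fintype ι] (f : ι → Fin n)
    (hf : G.IsClique (Set.range f)) : (P.submatrix f f).PosSemidef := by
  classical
  have hC : G.IsClique ((Finset.univ.image f : Finset (Fin n)) : Set (Fin n)) := by simpa using hf
  exact (hP.2.2 _ hC).submatrix fun k => ⟨f k, by simp⟩

theorem posSemidef_submatrix_pair (hP : PartiallyPos G P) {i j : Fin n} (hij : G.Adj i j) :
    (P.submatrix ![i, j] ![i, j]).PosSemidef :=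
  hP.posSemidef_submatrix _ (by simpa [SimpleGraph.isClique_pair] using fun _ => hij.symm)

theorem diag_nonneg (hP : PartiallyPos G P) (i : Fin n) : 0 ≤ P i i :=
  (hP.posSemidef_submatrix (fun _ : Fin 1 => i) (by simp)).diag_nonneg (i := 0)

theorem apply_eq_zero_of_diag_eq_zero (hP : PartiallyPos G P) {i : Fin n} (hi : P i i = 0)
    (j : Fin n) : P i j = 0 := by
  by_cases hij : G.Adj i j
  · simpa using (hP.posSemidef_submatrix_pair hij).apply_eq_zero_of_diag_eq_zero
      (i := 0) (by simpa using hi) 1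
  · by_cases h : i = j
    · rwa [← h]
    · exact hP.2.1 i j h hij

theorem apply_eq_zero_of_diag_eq_zero_of_sub {M A : Matrix (Fin n) (Fin n) ℂ}
    (hA : PartiallyPos G A) (hMA : PartiallyPos G (M - A)) {i : Fin n} (hi : M i i = 0)
    (j : Fin n) : A i j = 0 ∧ M i j = 0 := by
  have hM : ∀ k l, M k l = A k l + (M - A) k l := fun k l => by simp
  obtain ⟨hAi, hMAi⟩ := (add_eq_zero_iff_of_nonneg (hA.diag_nonneg i) (hMA.diag_nonneg i)).1
    (by rw [← hM, hi])
  rw [hM, hA.apply_eq_zero_of_diag_eq_zero hAi, hMA.apply_eq_zero_of_diag_eq_zero hMAi]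
  simp

theorem apply_eq_div_mul_of_adj {M A : Matrix (Fin n) (Fin n) ℂ}
    (hA : PartiallyPos G A) (hMA : PartiallyPos G (M - A)) {i j : Fin n} (hij : G.Adj i j)
    (hdet : (M.submatrix ![i, j] ![i, j]).det = 0) (hi : M i i ≠ 0) :
    A i j = A i i / M i i * M i j ∧ A j j = A i i / M i i * M j j := by
  have h := eq_smul_of_posSemidef_of_posSemidef_sub_of_det_eq_zero
    (hA.posSemidef_submatrix_pair hij) (hMA.posSemidef_submatrix_pair hij) hdet hi
  have h01 := congrFun₂ h 0 1
  have h11 := congrFun₂ h 1 1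
  simp only [submatrix_apply, cons_val_zero, cons_val_one] at h01 h11
  exact ⟨h01, h11⟩

theorem exists_nonneg_smul_eq_of_sub {M A : Matrix (Fin n) (Fin n) ℂ}
    (hA : PartiallyPos G A) (hMA : PartiallyPos G (M - A))
    (hrank : ∀ C : Finset (Fin n),
      (G.IsClique (C : Set (Fin n)) ∧
        ∀ D : Finset (Fin n), G.IsClique (D : Set (Fin n)) → C ⊆ D → C = D) →
      (M.submatrix (fun i : C => (i : Fin n)) (fun j : C => (j : Fin n))).rank ≤ 1)
    (hconn : (G.induce {i : Fin n | M i i ≠ 0}).Connected) :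
    ∃ a : ℝ, 0 ≤ a ∧ A = (a : ℂ) • M := by
  have hM : ∀ i j, M i j = A i j + (M - A) i j := fun i j => by simp
  have hedge : ∀ i j, G.Adj i j → M i i ≠ 0 →
      A i j = A i i / M i i * M i j ∧ A j j = A i i / M i i * M j j := fun i j hij hi =>
    hA.apply_eq_div_mul_of_adj hMA hij (det_submatrix_pair_eq_zero_of_adj hrank hij) hi
  have hratio : ∀ u v : {i : Fin n | M i i ≠ 0}, A u u / M u u = A v v / M v v :=
    hconn.preconnected.eq_of_forall_adj fun u v huv => by
      rw [(hedge u v huv u.2).2, mul_div_cancel_right₀ _ v.2]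
  obtain ⟨i₀⟩ := hconn.nonempty
  have hM₀ : 0 ≤ M i₀ i₀ := hM i₀ i₀ ▸ add_nonneg (hA.diag_nonneg i₀) (hMA.diag_nonneg i₀)
  set c := A i₀ i₀ / M i₀ i₀
  have hc : 0 ≤ c := div_nonneg (hA.diag_nonneg i₀) hM₀
  refine ⟨c.re, (Complex.nonneg_iff.1 hc).1, ?_⟩
  rw [← Complex.eq_re_of_ofReal_le (by rwa [Complex.ofReal_zero])]
  ext i j
  rw [Matrix.smul_apply, smul_eq_mul]
  by_cases hi : M i i = 0
  · obtain ⟨hAij, hMij⟩ := hA.apply_eq_zero_of_diag_eq_zero_of_sub hMA hi j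
    rw [hAij, hMij, mul_zero]
  have hri : A i i / M i i = c := hratio ⟨i, hi⟩ i₀
  rcases eq_or_ne i j with rfl | hne
  · rw [← hri, div_mul_cancel₀ _ hi]
  by_cases hij : G.Adj i j
  · rw [← hri]
    exact (hedge i j hij hi).1
  · rw [hM i j, hA.2.1 i j hne hij, hMA.2.1 i j hne hij]
    simp

end PartiallyPos

end PartiallyPositive

theorem extremal_ray_of_rank_one_cliques_and_connected_general {n : ℕ} (G : SimpleGraph (Fin n))
    (M : Matrix (Fin n) (Fin n) ℂ)
    (hrank : ∀ C : Finset (Fin n),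
      (G.IsClique (C : Set (Fin n)) ∧
        ∀ D : Finset (Fin n), G.IsClique (D : Set (Fin n)) → C ⊆ D → C = D) →
      (M.submatrix (fun i : C => (i : Fin n)) (fun j : C => (j : Fin n))).rank ≤ 1)
    (hconn : (G.induce {i : Fin n | M i i ≠ 0}).Connected) :
    ∀ A B : Matrix (Fin n) (Fin n) ℂ, PartiallyPos G A → PartiallyPos G B → M = A + B →
      (∃ a : ℝ, 0 ≤ a ∧ A = (a : ℂ) • M) ∧ (∃ b : ℝ, 0 ≤ b ∧ B = (b : ℂ) • M) := by
  rintro A B hA hB rfl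
  exact ⟨hA.exists_nonneg_smul_eq_of_sub (by rwa [add_sub_cancel_left]) hrank hconn,
    hB.exists_nonneg_smul_eq_of_sub (by rwa [add_sub_cancel_right]) hrank hconn⟩

/-- Sufficient conditions for a partially positive matrix on a chordal graph to generate
an extremal ray of the partially positive cone. -/
theorem extremal_ray_of_rank_one_cliques_and_connected {n : ℕ} (G : SimpleGraph (Fin n))
    (hG : IsChordal G) (M : Matrix (Fin n) (Fin n) ℂ) (hM0 : M ≠ 0)
    (hM : PartiallyPos G M)
    (hrank : ∀ C : Finset (Fin n),
      (G.IsClique (C : Set (Fin n)) ∧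
        ∀ D : Finset (Fin n), G.IsClique (D : Set (Fin n)) → C ⊆ D → C = D) →
      (M.submatrix (fun i : C => (i : Fin n)) (fun j : C => (j : Fin n))).rank ≤ 1)
    (hconn : (G.induce {i : Fin n | M i i ≠ 0}).Connected) :
    ∀ A B : Matrix (Fin n) (Fin n) ℂ, PartiallyPos G A → PartiallyPos G B → M = A + B →
      (∃ a : ℝ, 0 ≤ a ∧ A = (a : ℂ) • M) ∧ (∃ b : ℝ, 0 ≤ b ∧ B = (b : ℂ) • M) :=
  extremal_ray_of_rank_one_cliques_and_connected_general G M hrank hconn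
end

section
/- If M is a nonzero partially positive Hermitian matrix supported on a chordal graph G on {1,…,n} generating an extremal ray of the cone of partially positive matrices supported on G, then M is the entrywise projection onto the positions of G (and the diagonal) of a positive semidefinite rank-one matrix v v* for some v ∈ ℂ^n. -/
open ComplexOrder

/-!
Along a perfect elimination ordering, a partially positive `M` is completed one vertex at a time.
The new vertex `p` sees a clique `S` of the vertices already placed; positivity of `M` on
`{p} ∪ S` puts the column `M_{S p}` in the range of `M_{S S}`, say `M_{S S} u = M_{S p}`, with
nonnegative Schur complement `M_{p p} - u* M_{S S} u`, so bordering the current completion `N` by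
the column `N u` keeps it positive semidefinite. Hence `M = π(N)` with `N ⪰ 0`. Writing
`N = ∑ vₖ vₖ*` splits `M` into the partially positive pieces `π(vₖ vₖ*)`, and extremality forces a
nonzero piece to be a positive multiple of `M`.
-/

open Matrix

section LinearAlgebra

variable {𝕜 ι : Type*} [RCLike 𝕜] [Fintype ι]

lemma Matrix.IsHermitian.star_dotProduct_mulVec {A : Matrix ι ι 𝕜} (hA : A.IsHermitian)
    (x y : ι → 𝕜) : star (star x ⬝ᵥ A *ᵥ y) = star y ⬝ᵥ A *ᵥ x := by
  rw [star_dotProduct, star_star, star_mulVec, hA.eq, ← dotProduct_mulVec, dotProduct_comm]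

/-- `range A = (ker A)ᗮ` for Hermitian `A`. -/
theorem Matrix.IsHermitian.exists_mulVec_eq_s13 [DecidableEq ι] {A : Matrix ι ι 𝕜}
    (hA : A.IsHermitian) {b : ι → 𝕜} (hb : ∀ x, A *ᵥ x = 0 → star x ⬝ᵥ b = 0) :
    ∃ u, A *ᵥ u = b := by
  have hmem : WithLp.toLp 2 b ∈ LinearMap.range A.toEuclideanLin := by
    rw [← Submodule.orthogonal_orthogonal (LinearMap.range _),
      (isSymmetric_toEuclideanLin_iff.mpr hA).orthogonal_range, Submodule.mem_orthogonal]
    intro x hx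
    rw [EuclideanSpace.inner_eq_star_dotProduct, dotProduct_comm]
    exact hb _ (by simpa using congrArg WithLp.ofLp hx)
  obtain ⟨u, hu⟩ := hmem
  exact ⟨u.ofLp, by simpa using congrArg WithLp.ofLp hu⟩

lemma Matrix.star_dotProduct_mulVec_option_elim (K : Matrix (Option ι) (Option ι) 𝕜)
    (x y : ι → 𝕜) :
    star (fun o => o.elim 0 x) ⬝ᵥ K *ᵥ (fun o => o.elim 0 y) =
      star x ⬝ᵥ K.submatrix some some *ᵥ y := by
  simp [dotProduct, mulVec, Fintype.sum_option]

lemma Matrix.star_dotProduct_mulVec_single_none [DecidableEq ι]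
    (K : Matrix (Option ι) (Option ι) 𝕜) (x : ι → 𝕜) :
    star (fun o => o.elim 0 x) ⬝ᵥ K *ᵥ Pi.single none 1 =
      star x ⬝ᵥ fun j => K (some j) none := by
  simp [dotProduct, mulVec, Fintype.sum_option]

/-- Writing `K = [[α, b*], [b, A]]` with `none` as the first index: `b ∈ range A`, and the Schur
complement `α - u* A u` is nonnegative. -/
theorem Matrix.PosSemidef.exists_mulVec_submatrix_some_eq [DecidableEq ι]
    {K : Matrix (Option ι) (Option ι) 𝕜} (hK : K.PosSemidef) :
    ∃ u : ι → 𝕜, K.submatrix some some *ᵥ u = (fun j => K (some j) none) ∧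
      star u ⬝ᵥ K.submatrix some some *ᵥ u ≤ K none none := by
  set e : Option ι → 𝕜 := Pi.single none 1
  set emb : (ι → 𝕜) → Option ι → 𝕜 := fun x o => o.elim 0 x
  have hker : ∀ x, K.submatrix some some *ᵥ x = 0 →
      star x ⬝ᵥ (fun j => K (some j) none) = 0 := by
    intro x hx
    have hKx : K *ᵥ emb x = 0 := (hK.dotProduct_mulVec_zero_iff _).mp <| by
      rw [star_dotProduct_mulVec_option_elim, hx, dotProduct_zero]
    rw [← star_dotProduct_mulVec_single_none, ← hK.1.star_dotProduct_mulVec, hKx,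
      dotProduct_zero, star_zero]
  obtain ⟨u, hu⟩ := (hK.1.submatrix some).exists_mulVec_eq_s13 hker
  refine ⟨u, hu, ?_⟩
  have hr : star u ⬝ᵥ K.submatrix some some *ᵥ u = star (emb u) ⬝ᵥ K *ᵥ e := by
    rw [star_dotProduct_mulVec_single_none, hu]
  have hreal := (hK.1.submatrix some).im_star_dotProduct_mulVec_self u
  have hnn := hK.dotProduct_mulVec_nonneg (e - emb u)
  simp only [mulVec_sub, star_sub, sub_dotProduct, dotProduct_sub] at hnn
  rw [← hK.1.star_dotProduct_mulVec (emb u) e, ← hr, star_dotProduct_mulVec_option_elim,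
    RCLike.star_def, RCLike.conj_eq_iff_im.mpr hreal, sub_self, sub_zero, sub_nonneg] at hnn
  simpa [e, dotProduct, mulVec] using hnn

/-- The witness is `Qᴴ N Q + (α - w* N w) Eₚₚ`, where `Q` is the identity with column `p` replaced
by `w`. -/
theorem Matrix.PosSemidef.exists_border [DecidableEq ι] {N : Matrix ι ι 𝕜} (hN : N.PosSemidef)
    (p : ι) (w : ι → 𝕜) {α : 𝕜} (hα : star w ⬝ᵥ N *ᵥ w ≤ α) :
    ∃ N₁ : Matrix ι ι 𝕜, N₁.PosSemidef ∧ (∀ i ≠ p, ∀ j ≠ p, N₁ i j = N i j) ∧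
      (∀ i ≠ p, N₁ i p = (N *ᵥ w) i) ∧ N₁ p p = α := by
  set Q := (1 : Matrix ι ι 𝕜).updateCol p w
  have hQN : ∀ i j, (Qᴴ * N) i j = if i = p then star ((N *ᵥ w) j) else N i j := by
    intro i j
    rw [← hN.1.eq, ← conjTranspose_mul, hN.1.eq, mul_updateCol, mul_one, conjTranspose_apply]
    split_ifs with h
    · simp [h]
    · simp [updateCol_ne h, hN.1.apply]
  refine ⟨Qᴴ * N * Q + diagonal (Pi.single p (α - star w ⬝ᵥ N *ᵥ w)),
    (hN.conjTranspose_mul_mul_same Q).add (.diagonal ?_), ?_, ?_, ?_⟩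
  · exact Pi.single_nonneg.mpr (sub_nonneg.mpr hα)
  · intro i hi j hj
    simp [Q, mul_updateCol, hQN, hi, hj, diagonal_apply]
  · intro i hi
    simp [Q, mul_updateCol, hQN, hi, mulVec, dotProduct]
  · have hp : ((Qᴴ * N) *ᵥ w) p = star (N *ᵥ w) ⬝ᵥ w := by simp [mulVec, dotProduct, hQN]
    rw [star_mulVec, hN.1.eq, ← dotProduct_mulVec] at hp
    rw [add_apply, mul_updateCol, updateCol_self, hp, diagonal_apply_eq, Pi.single_eq_same,
      add_sub_cancel]

lemma Matrix.dotProduct_dite_zero {P : ι → Prop} [DecidablePred P] (F : ι → 𝕜)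
    (u : Subtype P → 𝕜) :
    F ⬝ᵥ (fun i => if h : P i then u ⟨i, h⟩ else 0) = ∑ k : Subtype P, F k * u k := by
  have hP (k : Subtype P) : F k * (if h : P k then u ⟨k, h⟩ else 0) = F k * u k := by
    rw [dif_pos k.2]
  have hnP (k : {i // ¬P i}) : F k * (if h : P k then u ⟨k, h⟩ else 0) = 0 := by
    rw [dif_neg k.2, mul_zero]
  rw [dotProduct, ← Fintype.sum_subtype_add_sum_subtype P]
  simp only [hP, hnP, Finset.sum_const_zero, add_zero]

end LinearAlgebra

variable {n : ℕ}

def CompletableOn (G : SimpleGraph (Fin n)) (M : Matrix (Fin n) (Fin n) ℂ) (T : Set (Fin n)) :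
    Prop :=
  ∃ N : Matrix (Fin n) (Fin n) ℂ, N.PosSemidef ∧
    ∀ i ∈ T, ∀ j ∈ T, (i = j ∨ G.Adj i j) → N i j = M i j

def GeneratesExtremeRay (G : SimpleGraph (Fin n)) (M : Matrix (Fin n) (Fin n) ℂ) : Prop :=
  ∀ A B : Matrix (Fin n) (Fin n) ℂ, PartiallyPos G A → PartiallyPos G B → M = A + B →
    (∃ a : ℝ, 0 ≤ a ∧ A = (a : ℂ) • M) ∧ (∃ b : ℝ, 0 ≤ b ∧ B = (b : ℂ) • M)

variable {G : SimpleGraph (Fin n)} {M : Matrix (Fin n) (Fin n) ℂ}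

lemma PartiallyPos.posSemidef_submatrix_s13 (hM : PartiallyPos G M) {α : Type*} [Fintype α]
    (f : α → Fin n) (hf : G.IsClique (Set.range f)) :
    (M.submatrix f f).PosSemidef := by
  classical
  have hC := hM.2.2 (Finset.univ.image f) (by simpa using hf)
  exact hC.submatrix (fun a => (⟨f a, by simp⟩ : Finset.univ.image f))

lemma completableOn_empty : CompletableOn G M ∅ :=
  ⟨0, .zero, by simp⟩

theorem CompletableOn.insert (hM : PartiallyPos G M) {T : Set (Fin n)} (hT : CompletableOn G M T)
    {p : Fin n} (hp : p ∉ T) (hS : G.IsClique {v | v ∈ T ∧ G.Adj p v}) :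
    CompletableOn G M (insert p T) := by
  classical
  obtain ⟨N, hN, hNM⟩ := hT
  let f : Option {v // v ∈ T ∧ G.Adj p v} → Fin n := fun o => o.elim p Subtype.val
  have hf : G.IsClique (Set.range f) := by
    refine (SimpleGraph.isClique_insert.mpr ⟨hS, fun v hv _ => hv.2⟩).subset ?_
    rintro _ ⟨_ | v, rfl⟩
    exacts [.inl rfl, .inr v.2]
  obtain ⟨u, hu, hle⟩ := (hM.posSemidef_submatrix_s13 f hf).exists_mulVec_submatrix_some_eq
  set w : Fin n → ℂ := fun v => if h : v ∈ T ∧ G.Adj p v then u ⟨v, h⟩ else 0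
  have hNw (i : Fin n) (hi : i ∈ T ∧ G.Adj p i) : (N *ᵥ w) i = M i p := by
    rw [mulVec, dotProduct_dite_zero]
    refine (Finset.sum_congr rfl fun k _ => ?_).trans (congrFun hu ⟨i, hi⟩)
    refine congrArg (· * u k) (hNM i hi.1 k k.2.1 ?_)
    by_cases hik : i = k
    exacts [.inl hik, .inr (hS hi k.2 hik)]
  have hwNw : star w ⬝ᵥ N *ᵥ w ≤ M p p := by
    have hsw : star w = fun v => if h : v ∈ T ∧ G.Adj p v then (star u) ⟨v, h⟩ else 0 := by
      ext v; split_ifs <;> simp [w, *]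
    calc star w ⬝ᵥ N *ᵥ w = (N *ᵥ w) ⬝ᵥ star w := dotProduct_comm _ _
      _ = ∑ k : {v // v ∈ T ∧ G.Adj p v}, (N *ᵥ w) k * star u k := by
        rw [hsw, dotProduct_dite_zero]
      _ = star u ⬝ᵥ (M.submatrix f f).submatrix some some *ᵥ u := by
        rw [hu, dotProduct_comm]
        exact Finset.sum_congr rfl fun k _ => by rw [hNw k k.2]; rfl
      _ ≤ M p p := hle
  obtain ⟨N₁, hN₁, hN₁N, hN₁p, hN₁pp⟩ := hN.exists_border p w hwNw
  have hcol (i : Fin n) (hi : i ∈ T) (hip : G.Adj i p) : N₁ i p = M i p := by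
    rw [hN₁p i (ne_of_mem_of_not_mem hi hp), hNw i ⟨hi, hip.symm⟩]
  refine ⟨N₁, hN₁, ?_⟩
  rintro i (rfl | hi) j (rfl | hj) hij
  · exact hN₁pp
  · have hadj := hij.resolve_left (ne_of_mem_of_not_mem hj hp).symm
    rw [← hN₁.1.apply, hcol j hj hadj.symm, hM.1.apply]
  · exact hcol i hi (hij.resolve_left (ne_of_mem_of_not_mem hi hp))
  · rw [hN₁N i (ne_of_mem_of_not_mem hi hp) j (ne_of_mem_of_not_mem hj hp), hNM i hi j hj hij]

/-- Adding the vertices in the reverse of a perfect elimination ordering, each new vertex is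
simplicial among those already added. -/
theorem IsPerfectElimOrdering.completableOn_univ {σ : Equiv.Perm (Fin n)}
    (hσ : IsPerfectElimOrdering G σ) (hM : PartiallyPos G M) :
    CompletableOn G M Set.univ := by
  let T (k : ℕ) : Set (Fin n) := {v | k ≤ σ.symm v}
  have hT0 : T 0 = Set.univ := Set.eq_univ_of_forall fun v => Nat.zero_le _
  have hTn : T n = ∅ := Set.eq_empty_of_forall_notMem fun v hv => (σ.symm v).2.not_ge hv
  rw [← hT0]
  refine Nat.decreasingInduction (motive := fun k _ => CompletableOn G M (T k)) ?_
    (hTn ▸ completableOn_empty) (Nat.zero_le n)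
  intro k hk ih
  have hTk : T k = insert (σ ⟨k, hk⟩) (T (k + 1)) := by
    ext v
    simp only [T, Set.mem_ofPred_eq, Set.mem_insert_iff, ← Equiv.symm_apply_eq, Fin.ext_iff]
    omega
  rw [hTk]
  refine ih.insert hM (by simp [T]) ((hσ ⟨k, hk⟩).subset fun v hv => .inr ⟨?_, hv.2⟩)
  exact Fin.lt_def.mpr hv.1

theorem PartiallyPos.exists_posSemidef_projOn_eq (hM : PartiallyPos G M) (hG : IsChordal G) :
    ∃ N : Matrix (Fin n) (Fin n) ℂ, N.PosSemidef ∧ projOn G N = M := by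
  obtain ⟨σ, hσ⟩ := hG
  obtain ⟨N, hN, hNM⟩ := hσ.completableOn_univ hM
  refine ⟨N, hN, funext₂ fun i j => ?_⟩
  by_cases hij : i = j ∨ G.Adj i j
  · rw [projOn, if_pos hij, hNM i trivial j trivial hij]
  · rw [projOn, if_neg hij, hM.2.1 i j (not_or.mp hij).1 (not_or.mp hij).2]

lemma projOn_add (A B : Matrix (Fin n) (Fin n) ℂ) :
    projOn G (A + B) = projOn G A + projOn G B := by
  ext i j
  simp only [projOn, Matrix.add_apply]
  split_ifs <;> simp

lemma projOn_smul (c : ℂ) (A : Matrix (Fin n) (Fin n) ℂ) :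
    projOn G (c • A) = c • projOn G A := by
  ext i j
  simp only [projOn, Matrix.smul_apply]
  split_ifs <;> simp

lemma projOn_sum {ι : Type*} (s : Finset ι) (A : ι → Matrix (Fin n) (Fin n) ℂ) :
    projOn G (∑ k ∈ s, A k) = ∑ k ∈ s, projOn G (A k) :=
  map_sum (AddMonoidHom.mk' (projOn G) projOn_add) A s

lemma Matrix.PosSemidef.partiallyPos_projOn {N : Matrix (Fin n) (Fin n) ℂ} (hN : N.PosSemidef) :
    PartiallyPos G (projOn G N) := by
  refine ⟨?_, fun i j hij hadj => if_neg (not_or.mpr ⟨hij, hadj⟩), fun C hC => ?_⟩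
  · ext i j
    have hji : (j = i ∨ G.Adj j i) ↔ (i = j ∨ G.Adj i j) := by rw [eq_comm, G.adj_comm]
    by_cases hij : i = j ∨ G.Adj i j
    · simp only [conjTranspose_apply, projOn, if_pos hij, if_pos (hji.mpr hij), hN.1.apply]
    · simp only [conjTranspose_apply, projOn, if_neg hij, if_neg (mt hji.mp hij), star_zero]
  · convert hN.submatrix ((↑) : C → Fin n) using 1
    ext i j
    by_cases hij : i = j
    · simp [projOn, hij]
    · exact if_pos (.inr (hC i.2 j.2 (Subtype.coe_ne_coe.mpr hij)))

lemma PartiallyPos.add {A B : Matrix (Fin n) (Fin n) ℂ} (hA : PartiallyPos G A)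
    (hB : PartiallyPos G B) : PartiallyPos G (A + B) :=
  ⟨hA.1.add hB.1, fun i j hij hadj => by simp [hA.2.1 i j hij hadj, hB.2.1 i j hij hadj],
    fun C hC => (hA.2.2 C hC).add (hB.2.2 C hC)⟩

lemma PartiallyPos.sum {ι : Type*} {s : Finset ι} {A : ι → Matrix (Fin n) (Fin n) ℂ}
    (hA : ∀ k ∈ s, PartiallyPos G (A k)) : PartiallyPos G (∑ k ∈ s, A k) :=
  Finset.sum_induction A (PartiallyPos G) (fun _ _ => PartiallyPos.add)
    ⟨isHermitian_zero, fun _ _ _ _ => rfl, fun _ _ => by simpa using PosSemidef.zero⟩ hA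

theorem GeneratesExtremeRay.exists_pos_smul_eq_of_eq_sum
    (hext : GeneratesExtremeRay G M) (hM0 : M ≠ 0) {ι : Type*} {s : Finset ι}
    {P : ι → Matrix (Fin n) (Fin n) ℂ} (hP : ∀ k ∈ s, PartiallyPos G (P k))
    (hMP : M = ∑ k ∈ s, P k) : ∃ k ∈ s, ∃ a : ℝ, 0 < a ∧ P k = (a : ℂ) • M := by
  classical
  obtain ⟨k, hk, hPk⟩ := Finset.exists_ne_zero_of_sum_ne_zero (hMP ▸ hM0)
  have hsplit : M = P k + ∑ j ∈ s.erase k, P j := by rw [Finset.add_sum_erase s P hk, hMP]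
  obtain ⟨⟨a, ha, hPa⟩, -⟩ :=
    hext _ _ (hP k hk) (PartiallyPos.sum fun j hj => hP j (Finset.mem_of_mem_erase hj)) hsplit
  refine ⟨k, hk, a, ha.lt_of_ne ?_, hPa⟩
  rintro rfl
  exact hPk (by simpa using hPa)

lemma ofReal_smul_vecMulVec_self_star {ι : Type*} {r : ℝ} (hr : 0 ≤ r) (v : ι → ℂ) :
    (r : ℂ) • vecMulVec v (star v) = vecMulVec ((√r : ℂ) • v) (star ((√r : ℂ) • v)) := by
  ext i j
  simp only [Matrix.smul_apply, vecMulVec_apply, Pi.smul_apply, Pi.star_apply, star_smul,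
    smul_eq_mul, Complex.star_def, Complex.conj_ofReal]
  have hr' : (r : ℂ) = √r * √r := by exact_mod_cast (Real.mul_self_sqrt hr).symm
  rw [hr']
  ring

/-- An extremal-ray generator of the partially positive cone on a chordal graph is the
projection of a rank-one positive semidefinite matrix `v v*`. -/
theorem extremal_ray_is_proj_of_rank_one {n : ℕ} (G : SimpleGraph (Fin n))
    (hG : IsChordal G) (M : Matrix (Fin n) (Fin n) ℂ) (hM0 : M ≠ 0)
    (hM : PartiallyPos G M)
    (hext : ∀ A B : Matrix (Fin n) (Fin n) ℂ, PartiallyPos G A → PartiallyPos G B →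
      M = A + B →
      (∃ a : ℝ, 0 ≤ a ∧ A = (a : ℂ) • M) ∧ (∃ b : ℝ, 0 ≤ b ∧ B = (b : ℂ) • M)) :
    ∃ v : Fin n → ℂ, M = projOn G (Matrix.vecMulVec v (star v)) := by
  obtain ⟨N, hN, hNM⟩ := hM.exists_posSemidef_projOn_eq hG
  obtain ⟨m, v, rfl⟩ := posSemidef_iff_eq_sum_vecMulVec.mp hN
  obtain ⟨k, -, a, ha, hka⟩ := GeneratesExtremeRay.exists_pos_smul_eq_of_eq_sum hext hM0
    (fun k _ => (posSemidef_vecMulVec_self_star (v k)).partiallyPos_projOn)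
    (by rw [← hNM, projOn_sum])
  refine ⟨(√a⁻¹ : ℂ) • v k, ?_⟩
  rw [← ofReal_smul_vecMulVec_self_star (inv_nonneg.mpr ha.le), projOn_smul, hka, smul_smul,
    ← Complex.ofReal_mul, inv_mul_cancel₀ ha.ne', Complex.ofReal_one, one_smul]
end

section
/- Products of two band matrices span everything blockwise: let 1 < b < n and for 1 ≤ k ≤ n−b+1 let π_k : M_n(ℂ) → M_b(ℂ) extract the principal submatrix indexed by {k,…,k+b−1}. Let Φ : E_{n,b} → ⊕_{k=1}^{n−b+1} M_b(ℂ) be Φ(M) = (π_k(M))_k, where E_{n,b} ⊆ M_n(ℂ) is the space of band matrices (M_{ij} = 0 if |i−j| ≥ b). Then the linear span of {Φ(A)·Φ(B) : A, B ∈ E_{n,b}} together with Φ(E_{n,b}) equals all of ⊕_{k=1}^{n−b+1} M_b(ℂ), while Φ itself is not surjective. -/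
/-! For matrix units, `Φ(e_pq) * Φ(e_qr)` is `Φ(e_pr)` with the blocks whose window misses `q`
removed. Taking for `q` the first and the last index of window `k`, the two products keep `e_pr` in
the windows on one side of `k` and in window `k` itself, so their sum minus `Φ(e_pr)` is `e_pr`
isolated in block `k`. `Φ` is not surjective because consecutive windows overlap: block `k` at
`(i + 1, j + 1)` and block `k + 1` at `(i, j)` read the same entry of `M`. -/

/-- `M` is a band matrix of bandwidth `b`: `M i j = 0` whenever `|i - j| ≥ b`. -/
def IsBand (n b : ℕ) (M : Matrix (Fin n) (Fin n) ℂ) : Prop :=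
  ∀ i j : Fin n, (b : ℤ) ≤ |((i : ℕ) : ℤ) - ((j : ℕ) : ℤ)| → M i j = 0

/-- `Φ`: the tuple of all `b × b` principal blocks along the diagonal of `M`. -/
def blockMap {n b : ℕ} (h : b ≤ n) (M : Matrix (Fin n) (Fin n) ℂ) :
    (k : Fin (n - b + 1)) → Matrix (Fin b) (Fin b) ℂ :=
  fun k i j =>
    M ⟨k.1 + i.1, by have hk := k.2; have hi := i.2; omega⟩
      ⟨k.1 + j.1, by have hk := k.2; have hj := j.2; omega⟩

open Matrix Function

section Submatrix

variable {ι κ R : Type*} [DecidableEq κ]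

theorem Matrix.submatrix_single_eq_zero_of_notMem_range [Zero R] {μ : Type*} {e : ι → κ}
    (f : μ → κ) {p : κ} (hp : p ∉ Set.range e) (q : κ) (c : R) :
    (single p q c).submatrix e f = 0 := by
  ext i j
  exact single_apply_of_row_ne (fun h => hp ⟨i, h.symm⟩) _ _ _

theorem Matrix.submatrix_single_apply_injective [Zero R] [DecidableEq ι] {e : ι → κ}
    (he : Injective e) (i j : ι) (c : R) :
    (single (e i) (e j) c).submatrix e e = single i j c := by
  ext i' j'
  simp [single_apply, he.eq_iff]

theorem Matrix.submatrix_single_mul_submatrix_single [Fintype ι] [NonUnitalNonAssocSemiring R]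
    {e : ι → κ} (he : Injective e) (p q r : κ) (a c : R) :
    (single p q a).submatrix e e * (single q r c).submatrix e e =
      if q ∈ Set.range e then (single p r (a * c)).submatrix e e else 0 := by
  ext i j
  split_ifs with hq
  · obtain ⟨m, rfl⟩ := hq
    rw [mul_apply, Finset.sum_eq_single m]
    · simp only [submatrix_apply, single_apply]
      split_ifs <;> simp_all
    · intro m' _ hm'
      simp [(he.ne hm').symm]
    · simp
  · refine Finset.sum_eq_zero fun m _ => ?_
    simp [single_apply_of_row_ne (fun h => hq ⟨m, h.symm⟩)]

end Submatrix

section BlockMap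

variable {n b : ℕ}

def blockWindow (h : b ≤ n) (k : Fin (n - b + 1)) (i : Fin b) : Fin n :=
  ⟨k.1 + i.1, by have hk := k.2; have hi := i.2; omega⟩

theorem blockMap_eq_submatrix (h : b ≤ n) (M : Matrix (Fin n) (Fin n) ℂ) (k : Fin (n - b + 1)) :
    blockMap h M k = M.submatrix (blockWindow h k) (blockWindow h k) :=
  rfl

theorem blockWindow_injective (h : b ≤ n) (k : Fin (n - b + 1)) :
    Injective (blockWindow h k) := fun i j hij => by
  simpa [blockWindow, Fin.ext_iff] using hij

theorem mem_range_blockWindow (h : b ≤ n) (k : Fin (n - b + 1)) (q : Fin n) :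
    q ∈ Set.range (blockWindow h k) ↔ k.1 ≤ q.1 ∧ q.1 < k.1 + b := by
  constructor
  · rintro ⟨i, rfl⟩
    simp [blockWindow]
  · intro hq
    exact ⟨⟨q.1 - k.1, by omega⟩, Fin.ext (by simp only [blockWindow]; omega)⟩

theorem blockMap_single_mul_blockMap_single (h : b ≤ n) (p q r : Fin n) :
    blockMap h (single p q 1) * blockMap h (single q r 1) =
      fun k => if q ∈ Set.range (blockWindow h k) then blockMap h (single p r 1) k else 0 := by
  funext k
  simp only [Pi.mul_apply, blockMap_eq_submatrix, mul_one,
    submatrix_single_mul_submatrix_single (blockWindow_injective h k)]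

theorem blockMap_apply_eq_of_add_eq (h : b ≤ n) (M : Matrix (Fin n) (Fin n) ℂ)
    {k k' : Fin (n - b + 1)} {i j i' j' : Fin b} (hi : k.1 + i.1 = k'.1 + i'.1)
    (hj : k.1 + j.1 = k'.1 + j'.1) :
    blockMap h M k i j = blockMap h M k' i' j' := by
  simp only [blockMap, hi, hj]

theorem blockMap_not_surjective (hb : 1 < b) (hn : b < n) : ¬ Surjective (blockMap hn.le) := by
  intro hsurj
  obtain ⟨M, hM⟩ := hsurj (Pi.single ⟨0, by omega⟩ (single ⟨b - 1, by omega⟩ ⟨b - 1, by omega⟩ 1))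
  have hoverlap := blockMap_apply_eq_of_add_eq hn.le M (k := ⟨0, by omega⟩) (k' := ⟨1, by omega⟩)
    (i := ⟨b - 1, by omega⟩) (j := ⟨b - 1, by omega⟩) (i' := ⟨b - 2, by omega⟩)
    (j' := ⟨b - 2, by omega⟩) (by dsimp only; omega) (by dsimp only; omega)
  simp [hM] at hoverlap

theorem isBand_single {p q : Fin n} (hpq : |((p : ℕ) : ℤ) - ((q : ℕ) : ℤ)| < b) (c : ℂ) :
    IsBand n b (single p q c) := by
  intro i j hij
  refine single_apply_of_ne _ _ _ _ _ ?_
  rintro ⟨rfl, rfl⟩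
  omega

end BlockMap

section Span

variable {n b : ℕ}

def bandBlockSpan (h : b ≤ n) : Submodule ℂ (Fin (n - b + 1) → Matrix (Fin b) (Fin b) ℂ) :=
  Submodule.span ℂ
    ({x | ∃ M : Matrix (Fin n) (Fin n) ℂ, IsBand n b M ∧ x = blockMap h M} ∪
      {x | ∃ A B : Matrix (Fin n) (Fin n) ℂ, IsBand n b A ∧ IsBand n b B ∧
        x = blockMap h A * blockMap h B})

theorem blockMap_mem_bandBlockSpan (h : b ≤ n) {M : Matrix (Fin n) (Fin n) ℂ}
    (hM : IsBand n b M) : blockMap h M ∈ bandBlockSpan h :=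
  Submodule.subset_span (Or.inl ⟨M, hM, rfl⟩)

theorem blockMap_mul_blockMap_mem_bandBlockSpan (h : b ≤ n) {A B : Matrix (Fin n) (Fin n) ℂ}
    (hA : IsBand n b A) (hB : IsBand n b B) : blockMap h A * blockMap h B ∈ bandBlockSpan h :=
  Submodule.subset_span (Or.inr ⟨A, B, hA, hB, rfl⟩)

theorem piSingle_single_eq_blockMap_combination (h : b ≤ n) (hb : 0 < b) (k : Fin (n - b + 1))
    (i j : Fin b) :
    let w := blockWindow h k
    let p := w i
    let r := w j
    let first := w ⟨0, hb⟩
    let last := w ⟨b - 1, by omega⟩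
    Pi.single k (single i j 1) =
      blockMap h (single p last 1) * blockMap h (single last r 1) +
        blockMap h (single p first 1) * blockMap h (single first r 1) -
          blockMap h (single p r 1) := by
  intro w p r first last
  simp only [blockMap_single_mul_blockMap_single]
  funext k'
  simp only [Pi.add_apply, Pi.sub_apply]
  by_cases hk : k' = k
  · subst hk
    have hfirst : first ∈ Set.range w := ⟨_, rfl⟩
    have hlast : last ∈ Set.range w := ⟨_, rfl⟩
    rw [if_pos hfirst, if_pos hlast, add_sub_cancel_right, Pi.single_eq_same,
      blockMap_eq_submatrix, submatrix_single_apply_injective (blockWindow_injective h k')]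
  rw [Pi.single_eq_of_ne hk]
  by_cases hp : p ∈ Set.range (blockWindow h k')
  · have hk' : k'.1 ≠ k.1 := Fin.val_ne_of_ne hk
    -- a window `k' ≠ k` that contains `p` contains exactly one end point of window `k`
    simp only [mem_range_blockWindow, p, first, last, w, blockWindow] at hp ⊢
    split_ifs <;> first | omega | simp
  · simp [blockMap_eq_submatrix, submatrix_single_eq_zero_of_notMem_range _ hp]

theorem piSingle_single_mem_bandBlockSpan (h : b ≤ n) (hb : 0 < b) (k : Fin (n - b + 1))
    (i j : Fin b) : Pi.single k (single i j 1) ∈ bandBlockSpan h := by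
  rw [piSingle_single_eq_blockMap_combination h hb]
  have hband : ∀ i' j' : Fin b, IsBand n b (single (blockWindow h k i') (blockWindow h k j') 1) :=
    fun i' j' => isBand_single (by simp only [blockWindow, abs_sub_lt_iff]; omega) 1
  refine Submodule.sub_mem _ (Submodule.add_mem _ ?_ ?_) (blockMap_mem_bandBlockSpan h (hband i j))
  all_goals exact blockMap_mul_blockMap_mem_bandBlockSpan h (hband _ _) (hband _ _)

theorem bandBlockSpan_eq_top (h : b ≤ n) (hb : 0 < b) : bandBlockSpan h = ⊤ := by
  rw [eq_top_iff, ← (Pi.basis fun _ => stdBasis ℂ (Fin b) (Fin b)).span_eq, Submodule.span_le]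
  rintro _ ⟨⟨k, i, j⟩, rfl⟩
  simpa [stdBasis_eq_single] using piSingle_single_mem_bandBlockSpan h hb k i j

end Span

/-- Products of two band matrices, together with the band matrices themselves, span all
of `⊕ₖ M_b(ℂ)` blockwise; yet `Φ` itself is not surjective. -/
theorem band_products_span_blocks {n b : ℕ} (hb : 1 < b) (hn : b < n) :
    (Submodule.span ℂ
        ({x | ∃ M : Matrix (Fin n) (Fin n) ℂ, IsBand n b M ∧ x = blockMap hn.le M} ∪
          {x | ∃ A B : Matrix (Fin n) (Fin n) ℂ, IsBand n b A ∧ IsBand n b B ∧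
            x = blockMap hn.le A * blockMap hn.le B}) = ⊤) ∧
      ¬ Function.Surjective
          (fun M : {M : Matrix (Fin n) (Fin n) ℂ // IsBand n b M} => blockMap hn.le M.1) :=
  ⟨bandBlockSpan_eq_top hn.le (by omega),
    fun hsurj => blockMap_not_surjective hb hn hsurj.of_comp⟩
end

section
/- Let G be a chordal graph on {1,…,n} with maximal cliques C_1,…,C_m and let Φ(M) = ((M_{ij})_{i,j∈C_k})_{k=1}^m map matrices supported on G into ⊕_k M_{|C_k|}(ℂ). Then Φ is positive and order-reflecting on the partially positive cone: for M supported on G, every component Φ(M)_k is positive semidefinite if and only if M lies in the projection of the PSD cone of M_n(ℂ) onto matrices supported on G. -/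
open ComplexOrder

/-!
Necessity: on a clique, `projOn G P` agrees with `P`, and principal submatrices of a PSD matrix
are PSD. Sufficiency: build a PSD completion by adding the vertices in reverse perfect
elimination order. Let `Q` be a PSD matrix agreeing with `M` on the edges and diagonal inside the
set `T` of processed vertices. When `v` joins `T`, its neighbours `N` in `T` form a clique
together with `v`, so the block of `M` on `{v} ∪ N` is PSD. Hence the column `M_{N,v}` lies in
the range of `M_{N,N} = Q_{N,N}`, say `M_{N,v} = Q_{N,N} u`, and `u* Q u ≤ M_{v,v}` (Schur
complement). If `L` fixes the coordinates in `T` and sends `e_v` to `u`, then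
`Lᴴ Q L + (M_{v,v} - u* Q u) E_{v,v}` is PSD, agrees with `Q` on `T`, and agrees with `M` on the
new row and column.
-/

open Matrix Finset

namespace Matrix

theorem range_mulVecLin_conjTranspose_mul_self {m n R : Type*} [Fintype m] [Fintype n] [Field R]
    [PartialOrder R] [StarRing R] [StarOrderedRing R] (A : Matrix m n R) :
    LinearMap.range (Aᴴ * A).mulVecLin = LinearMap.range Aᴴ.mulVecLin := by
  refine Submodule.eq_of_le_of_finrank_eq ?_ ?_
  · rw [mulVecLin_mul]
    exact LinearMap.range_comp_le_range _ _
  · exact (rank_conjTranspose_mul_self A).trans (rank_conjTranspose A).symm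

theorem conjTranspose_mul_mul_apply {ι m R : Type*} [Fintype ι] [Fintype m] [CommSemiring R]
    [StarRing R] (A : Matrix ι ι R) (B : Matrix ι m R) (i j : m) :
    (Bᴴ * A * B : Matrix m m R) i j = star (Bᵀ i) ⬝ᵥ A *ᵥ Bᵀ j := by
  simp only [mul_apply, dotProduct, mulVec, conjTranspose_apply, transpose_apply, Pi.star_apply,
    Finset.mul_sum, Finset.sum_mul, mul_assoc]
  exact Finset.sum_comm

variable {ι 𝕜 : Type*} [Fintype ι] [RCLike 𝕜]

theorem IsHermitian.star_dotProduct_mulVec_s17 {A : Matrix ι ι 𝕜} (hA : A.IsHermitian) (x y : ι → 𝕜) :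
    star (star x ⬝ᵥ A *ᵥ y) = star y ⬝ᵥ A *ᵥ x := by
  rw [← star_dotProduct, star_mulVec, hA.eq, ← dotProduct_mulVec]

theorem dotProduct_eq_of_eqOn {x y u : ι → 𝕜} {N : Finset ι} (hu : ∀ i ∉ N, u i = 0)
    (h : ∀ i ∈ N, x i = y i) : x ⬝ᵥ u = y ⬝ᵥ u :=
  Finset.sum_congr rfl fun i _ => by by_cases hi : i ∈ N <;> simp [hi, h, hu]

variable [DecidableEq ι]

theorem PosSemidef.exists_eqOn_of_submatrix {A : Matrix ι ι 𝕜} {S : Finset ι}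
    (hA : (A.submatrix ((↑) : S → ι) (↑)).PosSemidef) :
    ∃ C : Matrix ι ι 𝕜, C.PosSemidef ∧ ∀ i ∈ S, ∀ j ∈ S, C i j = A i j := by
  let R : Matrix S ι 𝕜 := (of fun i => if h : i ∈ S then Pi.single ⟨i, h⟩ 1 else 0)ᵀ
  refine ⟨_, hA.conjTranspose_mul_mul_same R, fun i hi j hj => ?_⟩
  have hR : ∀ k (hk : k ∈ S), Rᵀ k = Pi.single ⟨k, hk⟩ 1 := fun k hk => by
    simp only [R, transpose_transpose]; exact dif_pos hk
  rw [conjTranspose_mul_mul_apply, hR i hi, hR j hj]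
  simp

open scoped MatrixOrder in
theorem PosSemidef.exists_mulVec_eq_col {C : Matrix ι ι 𝕜} (hC : C.PosSemidef) (N : Finset ι)
    (v : ι) : ∃ u : ι → 𝕜, (∀ i ∉ N, u i = 0) ∧ ∀ j ∈ N, (C *ᵥ u) j = C j v := by
  -- With `C = Yᴴ Y`, the `N`-block of `C` is `(Y D)ᴴ (Y D)` and the `N`-part of its column `v`
  -- is `(Y D)ᴴ (Y e_v)`, which lies in the range of `(Y D)ᴴ`.
  obtain ⟨Y, rfl⟩ := CStarAlgebra.nonneg_iff_eq_star_mul_self.mp hC.nonneg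
  set D : Matrix ι ι 𝕜 := diagonal fun i => if i ∈ N then 1 else 0 with hD
  have hDH : Dᴴ = D := by
    rw [hD, diagonal_conjTranspose]
    congr 1
    ext i
    split_ifs <;> simp [*]
  obtain ⟨u₀, hu₀⟩ : (Y * D)ᴴ *ᵥ (Y *ᵥ Pi.single v 1) ∈
      LinearMap.range ((Y * D)ᴴ * (Y * D)).mulVecLin := by
    rw [range_mulVecLin_conjTranspose_mul_self]
    exact ⟨_, rfl⟩
  refine ⟨D *ᵥ u₀, fun i hi => by simp [hD, mulVec_diagonal, hi], fun j hj => ?_⟩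
  have h := congrFun hu₀ j
  simp only [mulVecLin_apply, conjTranspose_mul, hDH, ← mulVec_mulVec] at h
  rw [hD, mulVec_diagonal, mulVec_diagonal, if_pos hj, one_mul, one_mul, ← hD] at h
  rw [star_eq_conjTranspose, ← mulVec_mulVec, h, mulVec_mulVec, mulVec_single_one]
  rfl

theorem PosSemidef.dotProduct_mulVec_le_of_mulVec_eq_col {C : Matrix ι ι 𝕜} (hC : C.PosSemidef)
    {N : Finset ι} {v : ι} {u : ι → 𝕜} (hu₀ : ∀ i ∉ N, u i = 0)
    (hu : ∀ j ∈ N, (C *ᵥ u) j = C j v) : star u ⬝ᵥ C *ᵥ u ≤ C v v := by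
  have hq : star u ⬝ᵥ C *ᵥ Pi.single v 1 = star u ⬝ᵥ C *ᵥ u := by
    rw [dotProduct_comm, dotProduct_comm _ (C *ᵥ u)]
    refine dotProduct_eq_of_eqOn (N := N) (fun i hi => by simp [hu₀ i hi]) fun j hj => ?_
    rw [hu j hj, mulVec_single_one]
    rfl
  have hq' : star (Pi.single v 1) ⬝ᵥ C *ᵥ u = star u ⬝ᵥ C *ᵥ u := by
    rw [← hC.1.star_dotProduct_mulVec_s17, hq, hC.1.star_dotProduct_mulVec_s17]
  have h0 := hC.dotProduct_mulVec_nonneg (Pi.single v 1 - u)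
  simp only [star_sub, mulVec_sub, sub_dotProduct, dotProduct_sub, hq, hq'] at h0
  rw [sub_self, sub_zero, sub_nonneg] at h0
  simpa using h0

theorem PosSemidef.exists_extension_s17 {C Q : Matrix ι ι 𝕜} (hC : C.PosSemidef) (hQ : Q.PosSemidef)
    {T N : Finset ι} {v : ι} (hvT : v ∉ T) (hNT : N ⊆ T) (hQC : ∀ i ∈ N, ∀ j ∈ N, Q i j = C i j) :
    ∃ P : Matrix ι ι 𝕜, P.PosSemidef ∧ (∀ i ∈ T, ∀ j ∈ T, P i j = Q i j) ∧
      ∀ j ∈ insert v N, P j v = C j v ∧ P v j = C v j := by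
  obtain ⟨u, hu₀, hu⟩ := hC.exists_mulVec_eq_col N v
  have hQu : ∀ j ∈ N, (Q *ᵥ u) j = C j v := fun j hj =>
    (dotProduct_eq_of_eqOn hu₀ fun k hk => hQC j hj k hk).trans (hu j hj)
  have hquad : star u ⬝ᵥ Q *ᵥ u = star u ⬝ᵥ C *ᵥ u := by
    rw [dotProduct_comm, dotProduct_comm _ (C *ᵥ u)]
    exact dotProduct_eq_of_eqOn (fun i hi => by simp [hu₀ i hi])
      fun j hj => (hQu j hj).trans (hu j hj).symm
  set c := C v v - star u ⬝ᵥ C *ᵥ u with hc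
  have hc₀ : 0 ≤ c := sub_nonneg.2 (hC.dotProduct_mulVec_le_of_mulVec_eq_col hu₀ hu)
  let L : Matrix ι ι 𝕜 := (of fun i => if i = v then u else if i ∈ T then Pi.single i 1 else 0)ᵀ
  have hLv : Lᵀ v = u := if_pos rfl
  have hLT : ∀ i ∈ T, Lᵀ i = Pi.single i 1 := fun i hi =>
    (if_neg (ne_of_mem_of_not_mem hi hvT)).trans (if_pos hi)
  have hD : (diagonal (Pi.single v c)).PosSemidef := posSemidef_diagonal_iff.2 fun i => by
    by_cases h : i = v <;> simp [h, hc₀]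
  set P := Lᴴ * Q * L + diagonal (Pi.single v c) with hPdef
  have hP : P.PosSemidef := (hQ.conjTranspose_mul_mul_same L).add hD
  have hPv : ∀ j ∈ insert v N, P j v = C j v := by
    intro j hj
    rw [hPdef, add_apply, conjTranspose_mul_mul_apply, hLv]
    rcases mem_insert.1 hj with rfl | hjN
    · rw [hLv, hquad, diagonal_apply_eq, Pi.single_eq_same, hc]
      ring
    · rw [hLT j (hNT hjN)]
      simp [ne_of_mem_of_not_mem (hNT hjN) hvT, hQu j hjN]
  refine ⟨P, hP, fun i hi j hj => ?_, fun j hj => ⟨hPv j hj, ?_⟩⟩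
  · rw [hPdef, add_apply, conjTranspose_mul_mul_apply, hLT i hi, hLT j hj]
    simp [diagonal_apply, ne_of_mem_of_not_mem hi hvT]
  · rw [← hP.1.apply, hPv j hj, hC.1.apply]

end Matrix

section Completion

variable {V 𝕜 : Type*} [Fintype V] [RCLike 𝕜]

def IsPSDCompletionOn_s17 (G : SimpleGraph V) (M P : Matrix V V 𝕜) (T : Finset V) : Prop :=
  P.PosSemidef ∧ ∀ i ∈ T, ∀ j ∈ T, (i = j ∨ G.Adj i j) → P i j = M i j

theorem posSemidef_submatrix_of_isClique_s17 {G : SimpleGraph V} {M : Matrix V V 𝕜}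
    (hmax : ∀ C : Finset V, (G.IsClique (C : Set V) ∧
        ∀ D : Finset V, G.IsClique (D : Set V) → C ⊆ D → C = D) →
      (M.submatrix (fun i : C => (i : V)) (fun j : C => (j : V))).PosSemidef)
    {S : Finset V} (hS : G.IsClique (S : Set V)) :
    (M.submatrix (fun i : S => (i : V)) (fun j : S => (j : V))).PosSemidef := by
  obtain ⟨C, hSC, hC⟩ :=
    (Set.toFinite {C : Finset V | G.IsClique (C : Set V)}).exists_le_maximal hS
  exact (hmax C ⟨hC.prop, fun D hD hCD => le_antisymm hCD (hC.2 hD hCD)⟩).submatrix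
    fun i : S => (⟨i, hSC i.2⟩ : C)

variable [DecidableEq V]

theorem IsPSDCompletionOn_s17.exists_insert {G : SimpleGraph V} [DecidableRel G.Adj]
    {M Q : Matrix V V 𝕜} {T : Finset V} {v : V}
    (hclique : ∀ S : Finset V, G.IsClique (S : Set V) →
      (M.submatrix (fun i : S => (i : V)) (fun j : S => (j : V))).PosSemidef)
    (hQ : IsPSDCompletionOn_s17 G M Q T) (hvT : v ∉ T)
    (hN : G.IsClique ((insert v (T.filter (G.Adj v)) : Finset V) : Set V)) :
    ∃ P, IsPSDCompletionOn_s17 G M P (insert v T) := by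
  set N := T.filter (G.Adj v)
  have hS : ∀ i ∈ insert v N, ∀ j ∈ insert v N, i = j ∨ G.Adj i j := fun i hi j hj =>
    or_iff_not_imp_left.2 (hN (mem_coe.2 hi) (mem_coe.2 hj))
  obtain ⟨C, hC, hCM⟩ := (hclique _ hN).exists_eqOn_of_submatrix
  have hQC : ∀ i ∈ N, ∀ j ∈ N, Q i j = C i j := fun i hi j hj => by
    rw [hCM i (mem_insert_of_mem hi) j (mem_insert_of_mem hj)]
    exact hQ.2 i (mem_filter.1 hi).1 j (mem_filter.1 hj).1
      (hS i (mem_insert_of_mem hi) j (mem_insert_of_mem hj))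
  obtain ⟨P, hP, hPQ, hPC⟩ := hC.exists_extension_s17 hQ.1 hvT (filter_subset _ _) hQC
  refine ⟨P, hP, fun i hi j hj hij => ?_⟩
  have hv := mem_insert_self v N
  rcases mem_insert.1 hi with hiv | hiT <;> rcases mem_insert.1 hj with hjv | hjT
  · rw [hiv, hjv]
    exact (hPC v hv).1.trans (hCM v hv v hv)
  · rw [hiv] at hij ⊢
    have hjN : j ∈ insert v N := mem_insert_of_mem <|
      mem_filter.2 ⟨hjT, hij.resolve_left (ne_of_mem_of_not_mem hjT hvT).symm⟩
    exact (hPC j hjN).2.trans (hCM v hv j hjN)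
  · rw [hjv] at hij ⊢
    have hiN : i ∈ insert v N := mem_insert_of_mem <|
      mem_filter.2 ⟨hiT, (hij.resolve_left (ne_of_mem_of_not_mem hiT hvT)).symm⟩
    exact (hPC i hiN).1.trans (hCM i hiN v hv)
  · exact (hPQ i hiT j hjT).trans (hQ.2 i hiT j hjT hij)

theorem IsChordal.exists_psdCompletion {n : ℕ} {G : SimpleGraph (Fin n)} (hG : IsChordal G)
    {M : Matrix (Fin n) (Fin n) 𝕜}
    (hclique : ∀ S : Finset (Fin n), G.IsClique (S : Set (Fin n)) →
      (M.submatrix (fun i : S => (i : Fin n)) (fun j : S => (j : Fin n))).PosSemidef) :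
    ∃ P, IsPSDCompletionOn_s17 G M P univ := by
  classical
  obtain ⟨σ, hσ⟩ := hG
  let T : ℕ → Finset (Fin n) := fun k => univ.filter fun i => k ≤ σ.symm i
  suffices ∀ k ≤ n, ∃ P, IsPSDCompletionOn_s17 G M P (T k) by simpa [T] using this 0 (Nat.zero_le n)
  intro k hk
  induction hk using Nat.decreasingInduction with
  | self => exact ⟨0, .zero, fun i hi => absurd (mem_filter.1 hi).2 (not_le.2 (σ.symm i).2)⟩
  | of_succ k hk ih =>
    obtain ⟨Q, hQ⟩ := ih
    set v := σ ⟨k, hk⟩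
    have hT : T k = insert v (T (k + 1)) := by
      ext i
      simp only [T, v, mem_insert, mem_filter, mem_univ, true_and, ← σ.symm_apply_eq, Fin.ext_iff]
      omega
    have hv : v ∉ T (k + 1) := by simp [T, v]
    have hN : G.IsClique ((insert v ((T (k + 1)).filter (G.Adj v)) : Finset _) : Set (Fin n)) := by
      convert hσ ⟨k, hk⟩ using 1
      ext u
      simp [T, v, Fin.lt_def]
    rw [hT]
    exact hQ.exists_insert hclique hv hN

end Completion

theorem chordal_blockMap_order_embedding_general {n : ℕ} (G : SimpleGraph (Fin n))
    (hG : IsChordal G) (M : Matrix (Fin n) (Fin n) ℂ)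
    (hsupp : ∀ i j : Fin n, i ≠ j → ¬ G.Adj i j → M i j = 0) :
    (∀ C : Finset (Fin n),
        (G.IsClique (C : Set (Fin n)) ∧
          ∀ D : Finset (Fin n), G.IsClique (D : Set (Fin n)) → C ⊆ D → C = D) →
        (M.submatrix (fun i : C => (i : Fin n)) (fun j : C => (j : Fin n))).PosSemidef) ↔
      ∃ P : Matrix (Fin n) (Fin n) ℂ, P.PosSemidef ∧ projOn G P = M := by
  constructor
  · intro hmax
    obtain ⟨P, hP, hPM⟩ :=
      hG.exists_psdCompletion fun S hS => posSemidef_submatrix_of_isClique_s17 hmax hS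
    refine ⟨P, hP, ext fun i j => ?_⟩
    unfold projOn
    split_ifs with h
    · exact hPM i (mem_univ _) j (mem_univ _) h
    · exact (hsupp i j (fun h' => h (Or.inl h')) fun h' => h (Or.inr h')).symm
  · rintro ⟨P, hP, rfl⟩ C ⟨hC, -⟩
    convert hP.submatrix ((↑) : C → Fin n) using 1
    ext i j
    have hij : (i : Fin n) = j ∨ G.Adj i j := or_iff_not_imp_left.2 (hC i.2 j.2)
    simp only [submatrix_apply, projOn]
    exact if_pos hij

/-- `Φ` is positive and order-reflecting on the partially positive cone: all the
maximal-clique components of `Φ(M)` are PSD iff `M` is the projection of a PSD matrix. -/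
theorem chordal_blockMap_order_embedding {n : ℕ} (G : SimpleGraph (Fin n))
    (hG : IsChordal G) (M : Matrix (Fin n) (Fin n) ℂ) (hM : M.IsHermitian)
    (hsupp : ∀ i j : Fin n, i ≠ j → ¬ G.Adj i j → M i j = 0) :
    (∀ C : Finset (Fin n),
        (G.IsClique (C : Set (Fin n)) ∧
          ∀ D : Finset (Fin n), G.IsClique (D : Set (Fin n)) → C ⊆ D → C = D) →
        (M.submatrix (fun i : C => (i : Fin n)) (fun j : C => (j : Fin n))).PosSemidef) ↔
      ∃ P : Matrix (Fin n) (Fin n) ℂ, P.PosSemidef ∧ projOn G P = M :=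
  chordal_blockMap_order_embedding_general G hG M hsupp
end
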